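/- arXiv:1812.08900 — 6 statements merged into one kernel-verified Lean document; each statement's English description precedes it below -/
import Mathlib

section
/- Let q be a prime power, A an invertible 2×2 matrix over F_q with entries a, b, c, d, and f a monic irreducible polynomial over F_q of degree k ≥ 2. Then the polynomial (cx+d)^k · f((ax+b)/(cx+d)), after normalization to a monic polynomial, is again a monic irreducible polynomial of degree k over F_q. -/
open Polynomial

/-- The Möbius substitution `A ∘ f (x) = (cx+d)^(deg f) f((ax+b)/(cx+d))` as a polynomial. -/
noncomputable def mobius {F : Type*} [Field F] (A : Matrix (Fin 2) (Fin 2) F) (f : F[X]) : F[X] :=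
  ∑ i ∈ Finset.range (f.natDegree + 1),
    C (f.coeff i) * (C (A 0 0) * X + C (A 0 1)) ^ i *
      (C (A 1 0) * X + C (A 1 1)) ^ (f.natDegree - i)

/-- The monic normalization `[A] ∘ f`. -/
noncomputable def mobiusN {F : Type*} [Field F] (A : Matrix (Fin 2) (Fin 2) F) (f : F[X]) : F[X] :=
  mobius A f * C (mobius A f).leadingCoeff⁻¹

open IntermediateField

/-
Adjoin a root `α` of `f`. Since `f` has no root in `F`, the inverse Möbius transformation is
defined at `α`, giving `β` with `α = (aβ + b)/(cβ + d)`. Then `β` is a root of `A ∘ f`, and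
`F(β) = F(α)` has degree `k` over `F`; as `A ∘ f` is nonzero of degree at most `k`, its monic
normalization is the minimal polynomial of `β`.
-/

section Mobius

variable {F K : Type*} [Field F] [Field K] [Algebra F K]

lemma eval_ne_zero_of_irreducible {f : F[X]} (hirr : Irreducible f) (h2 : 2 ≤ f.natDegree)
    (r : F) : f.eval r ≠ 0 := fun hr => by
  rw [natDegree_eq_of_degree_eq_some (degree_eq_one_of_irreducible_of_root hirr hr)] at h2
  norm_num at h2

lemma natDegree_mobius_le (A : Matrix (Fin 2) (Fin 2) F) (f : F[X]) :
    (mobius A f).natDegree ≤ f.natDegree := by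
  refine natDegree_sum_le_of_forall_le _ _ fun i hi => ?_
  have hi : i ≤ f.natDegree := Nat.lt_succ_iff.mp (Finset.mem_range.mp hi)
  calc _ ≤ 0 + i * 1 + (f.natDegree - i) * 1 :=
        natDegree_mul_le_of_le (natDegree_mul_le_of_le (natDegree_C _).le
          (natDegree_pow_le_of_le i natDegree_linear_le))
          (natDegree_pow_le_of_le _ natDegree_linear_le)
    _ = f.natDegree := by omega

lemma aeval_mobius (A : Matrix (Fin 2) (Fin 2) F) (f : F[X]) {x : K}
    (hx : algebraMap F K (A 1 0) * x + algebraMap F K (A 1 1) ≠ 0) :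
    aeval x (mobius A f) =
      (algebraMap F K (A 1 0) * x + algebraMap F K (A 1 1)) ^ f.natDegree *
        aeval ((algebraMap F K (A 0 0) * x + algebraMap F K (A 0 1)) /
          (algebraMap F K (A 1 0) * x + algebraMap F K (A 1 1))) f := by
  rw [mobius, map_sum, aeval_eq_sum_range, Finset.mul_sum]
  refine Finset.sum_congr rfl fun i hi => ?_
  have hi : i ≤ f.natDegree := Nat.lt_succ_iff.mp (Finset.mem_range.mp hi)
  simp only [map_mul, map_pow, map_add, aeval_C, aeval_X, Algebra.smul_def]
  rw [div_pow, pow_sub₀ _ hx hi]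
  field_simp

lemma mobius_ne_zero {A : Matrix (Fin 2) (Fin 2) F} (hA : A.det ≠ 0) {f : F[X]}
    (hf : ∀ r, f.eval r ≠ 0) : mobius A f ≠ 0 := by
  obtain ⟨x, hx⟩ : ∃ x : F, A 1 0 * x + A 1 1 ≠ 0 := by
    by_contra! h
    have hd := h 0
    have hc := h 1
    simp only [mul_zero, zero_add, mul_one] at hd hc
    exact hA (by rw [Matrix.det_fin_two, hd, show A 1 0 = 0 by simpa [hd] using hc]; ring)
  intro h0
  have := aeval_mobius (K := F) A f hx
  simp only [h0, map_zero, Algebra.algebraMap_self, RingHom.id_apply, aeval_def,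
    eval₂_id] at this
  exact mul_ne_zero (pow_ne_zero _ hx) (hf _) this.symm

lemma mobius_adjugate_apply {a b c d α : K} (hdet : a * d - b * c ≠ 0) (hu : a - c * α ≠ 0) :
    c * ((d * α - b) / (a - c * α)) + d ≠ 0 ∧
      (a * ((d * α - b) / (a - c * α)) + b) / (c * ((d * α - b) / (a - c * α)) + d) = α := by
  have hden : c * ((d * α - b) / (a - c * α)) + d = (a * d - b * c) / (a - c * α) := by
    rw [mul_div_assoc', div_add' _ _ _ hu]; ring
  have hnum : a * ((d * α - b) / (a - c * α)) + b = (a * d - b * c) * α / (a - c * α) := by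
    rw [mul_div_assoc', div_add' _ _ _ hu]; ring
  rw [hden, hnum]
  exact ⟨div_ne_zero hdet hu, by field_simp⟩

lemma exists_mobius_preimage {A : Matrix (Fin 2) (Fin 2) F} (hA : A.det ≠ 0) {α : K}
    (hα : ∀ r, α ≠ algebraMap F K r) :
    ∃ β : K, algebraMap F K (A 1 0) * β + algebraMap F K (A 1 1) ≠ 0 ∧
      (algebraMap F K (A 0 0) * β + algebraMap F K (A 0 1)) /
        (algebraMap F K (A 1 0) * β + algebraMap F K (A 1 1)) = α := by
  set φ := algebraMap F K
  have hdet : φ (A 0 0) * φ (A 1 1) - φ (A 0 1) * φ (A 1 0) ≠ 0 := by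
    rw [← map_mul, ← map_mul, ← map_sub, ← Matrix.det_fin_two]
    exact (map_ne_zero φ).mpr hA
  have hu : φ (A 0 0) - φ (A 1 0) * α ≠ 0 := by
    intro hu
    by_cases hc : A 1 0 = 0
    · simp only [hc, map_zero, zero_mul, sub_zero] at hu
      simp [hc, hu] at hdet
    · exact hα (A 0 0 / A 1 0) (by
        rw [map_div₀, eq_div_iff ((map_ne_zero φ).mpr hc)]; linear_combination -hu)
  exact ⟨_, mobius_adjugate_apply hdet hu⟩

lemma mul_C_leadingCoeff_inv_eq_of_monic_dvd {p q : F[X]} (hp : p.Monic) (hpq : p ∣ q)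
    (hq : q ≠ 0) (hdeg : q.natDegree ≤ p.natDegree) :
    q * C q.leadingCoeff⁻¹ = p := by
  refine eq_of_monic_of_dvd_of_natDegree_le hp (monic_mul_leadingCoeff_inv hq)
    (dvd_mul_of_dvd_left hpq _) ?_
  rwa [natDegree_mul_C (inv_ne_zero (leadingCoeff_ne_zero.mpr hq))]

lemma ne_algebraMap_of_aeval_eq_zero {f : F[X]} (hf : ∀ r, f.eval r ≠ 0) {α : K}
    (hα : aeval α f = 0) (r : F) : α ≠ algebraMap F K r :=
  fun hr => hf r <| (algebraMap F K).injective <| by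
    rw [map_zero, ← hα, hr, aeval_algebraMap_apply, coe_aeval_eq_eval]

lemma mobius_apply_mem_adjoin (A : Matrix (Fin 2) (Fin 2) F) (β : K) :
    (algebraMap F K (A 0 0) * β + algebraMap F K (A 0 1)) /
      (algebraMap F K (A 1 0) * β + algebraMap F K (A 1 1)) ∈ F⟮β⟯ := by
  have hβ := mem_adjoin_simple_self F β
  have hF := IntermediateField.algebraMap_mem F⟮β⟯
  exact div_mem (add_mem (mul_mem (hF _) hβ) (hF _)) (add_mem (mul_mem (hF _) hβ) (hF _))

lemma natDegree_minpoly_le_of_mem_adjoin {α β : K} (hβ : IsIntegral F β)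
    (hα : α ∈ F⟮β⟯) :
    (minpoly F α).natDegree ≤ (minpoly F β).natDegree := by
  have : FiniteDimensional F F⟮β⟯ := adjoin.finiteDimensional hβ
  have hαint : IsIntegral F α := isIntegral_iff.mp (.of_finite F (⟨α, hα⟩ : F⟮β⟯))
  rw [← adjoin.finrank hαint, ← adjoin.finrank hβ]
  exact finrank_le_of_le_right (adjoin_simple_le_iff.mpr hα)

end Mobius

theorem stmt0_general {F : Type*} [Field F]
    (A : Matrix (Fin 2) (Fin 2) F) (hA : A.det ≠ 0)
    (f : F[X]) (hmon : f.Monic) (hirr : Irreducible f)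
    (k : ℕ) (hk : 2 ≤ k) (hdeg : f.natDegree = k) :
    (mobiusN A f).Monic ∧ Irreducible (mobiusN A f) ∧ (mobiusN A f).natDegree = k := by
  subst hdeg
  have : Fact (Irreducible f) := ⟨hirr⟩
  set α := AdjoinRoot.root f
  have hnoroot := eval_ne_zero_of_irreducible hirr hk
  have hα : aeval α f = 0 := by rw [AdjoinRoot.aeval_eq, AdjoinRoot.mk_self]
  have hminα : minpoly F α = f := by
    rw [AdjoinRoot.minpoly_root hirr.ne_zero, hmon.leadingCoeff, inv_one, C_1, mul_one]
  obtain ⟨β, hden, hβ⟩ :=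
    exists_mobius_preimage hA (ne_algebraMap_of_aeval_eq_zero hnoroot hα)
  have hne := mobius_ne_zero hA hnoroot
  have hβroot : aeval β (mobius A f) = 0 := by rw [aeval_mobius A f hden, hβ, hα, mul_zero]
  have hβint : IsIntegral F β := IsAlgebraic.isIntegral ⟨_, hne, hβroot⟩
  have hαmem : α ∈ F⟮β⟯ := hβ ▸ mobius_apply_mem_adjoin A β
  have hdvd := minpoly.dvd F β hβroot
  have hdeg_le : (minpoly F β).natDegree ≤ f.natDegree :=
    (natDegree_le_of_dvd hdvd hne).trans (natDegree_mobius_le A f)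
  have hdeg_ge : f.natDegree ≤ (minpoly F β).natDegree := by
    simpa only [hminα] using natDegree_minpoly_le_of_mem_adjoin hβint hαmem
  rw [mobiusN, mul_C_leadingCoeff_inv_eq_of_monic_dvd (minpoly.monic hβint) hdvd hne
    ((natDegree_mobius_le A f).trans hdeg_ge)]
  exact ⟨minpoly.monic hβint, minpoly.irreducible hβint, le_antisymm hdeg_le hdeg_ge⟩

theorem stmt0 {F : Type*} [Field F] [Fintype F]
    (A : Matrix (Fin 2) (Fin 2) F) (hA : A.det ≠ 0)
    (f : F[X]) (hmon : f.Monic) (hirr : Irreducible f)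
    (k : ℕ) (hk : 2 ≤ k) (hdeg : f.natDegree = k) :
    (mobiusN A f).Monic ∧ Irreducible (mobiusN A f) ∧ (mobiusN A f).natDegree = k :=
  stmt0_general A hA f hmon hirr k hk hdeg
end

section
/- Let q be a prime power, n ≥ 1, A ∈ GL(2, q^n), and 1 ≤ i ≤ n with t = gcd(i,n). Set C = A·σ_i(A)·σ_{2i}(A)···σ_{i(n/t−1)}(A). Then the order of the element [A, σ_i] in the group PΓL(2, q^n) equals (n/t) · ord([C]), where ord([C]) is the order of [C] in PGL(2, q^n). -/
open Polynomial

/-- The `i`-th iterate of the `q`-Frobenius (`q = p^e`), i.e. `x ↦ x^(q^i)`. -/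
noncomputable def frob (K : Type*) [Field K] (p e : ℕ) [Fact p.Prime] [CharP K p] (i : ℕ) :
    K →+* K :=
  iterateFrobenius K p (e * i)

/-- The Möbius–Frobenius action `[A, σᵢ] * f = [A] ∘ σᵢ(f)`. -/
noncomputable def pact (K : Type*) [Field K] (p e : ℕ) [Fact p.Prime] [CharP K p]
    (A : Matrix (Fin 2) (Fin 2) K) (i : ℕ) (f : K[X]) : K[X] :=
  mobiusN A (f.map (frob K p e i))

/-- The twisted product `A · σᵢ(A) · σ₂ᵢ(A) ⋯ σ_{i(k-1)}(A)`. -/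
noncomputable def conjProd (K : Type*) [Field K] (p e : ℕ) [Fact p.Prime] [CharP K p]
    (A : Matrix (Fin 2) (Fin 2) K) (i k : ℕ) : Matrix (Fin 2) (Fin 2) K :=
  ((List.range k).map fun j => A.map (frob K p e (i * j))).prod

/-- `F_{B,m}(x) = b x^(q^m+1) - a x^(q^m) + d x - c` for `B = [[a,b],[c,d]]`. -/
noncomputable def FPoly (K : Type*) [Field K] (p e : ℕ)
    (B : Matrix (Fin 2) (Fin 2) K) (m : ℕ) : K[X] :=
  C (B 0 1) * X ^ (p ^ (e * m) + 1) - C (B 0 0) * X ^ (p ^ (e * m)) + C (B 1 1) * X - C (B 1 0)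

/-- `F_{A,m,i}(x) = σ_{n-i}(F_{A_i^*, m-i}(x))` where `A_i^* = A σ₁(A) ⋯ σ_{i-1}(A)`. -/
noncomputable def FA (K : Type*) [Field K] (p e n : ℕ) [Fact p.Prime] [CharP K p]
    (A : Matrix (Fin 2) (Fin 2) K) (m i : ℕ) : K[X] :=
  (FPoly K p e (conjProd K p e A 1 i) (m - i)).map (frob K p e (n - i))


section AuxStmt4

variable (K : Type*) [Field K] (p e : ℕ) [Fact p.Prime] [CharP K p]

private lemma conjProd_add' (A : Matrix (Fin 2) (Fin 2) K) (i a b : ℕ) :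
    conjProd K p e A i (a + b) =
      conjProd K p e A i a * (conjProd K p e A i b).map (frob K p e (i * a)) := by
  have hfr : ∀ x y : ℕ, ⇑(frob K p e (x + y)) = ⇑(frob K p e x) ∘ ⇑(frob K p e y) := by
    intro x y
    funext z
    show iterateFrobenius K p (e * (x + y)) z =
      iterateFrobenius K p (e * x) (iterateFrobenius K p (e * y) z)
    rw [Nat.mul_add, iterateFrobenius_add_apply]
  unfold conjProd
  rw [List.range_add, List.map_append, List.prod_append]
  congr 1
  have h : ((List.map (fun j => A.map (frob K p e (i * j))) (List.range b)).prod).map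
      (frob K p e (i * a)) =
      ((RingHom.mapMatrix (frob K p e (i * a)) : Matrix (Fin 2) (Fin 2) K →+* _))
        (List.map (fun j => A.map (frob K p e (i * j))) (List.range b)).prod := rfl
  rw [h, map_list_prod, List.map_map, List.map_map]
  refine congrArg List.prod (List.map_congr_left fun j _ => ?_)
  show A.map (frob K p e (i * (a + j))) =
    (RingHom.mapMatrix (frob K p e (i * a))) (A.map (frob K p e (i * j)))
  rw [RingHom.mapMatrix_apply, Matrix.map_map, ← hfr]
  ring_nf

private lemma frob_id' (n : ℕ) [Fintype K] (hK : Fintype.card K = p ^ (e * n)) (s : ℕ)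
    (hs : n ∣ s) : frob K p e s = RingHom.id K := by
  obtain ⟨m, rfl⟩ := hs
  ext x
  show iterateFrobenius K p (e * (n * m)) x = x
  rw [iterateFrobenius_def]
  have h : e * (n * m) = (e * n) * m := by ring
  rw [h, pow_mul]
  have h2 := FiniteField.pow_card_pow (K := K) m x
  rwa [hK] at h2

private lemma conjProd_pow' (A : Matrix (Fin 2) (Fin 2) K) (n : ℕ) [Fintype K]
    (hK : Fintype.card K = p ^ (e * n)) (i d : ℕ) (hd : n ∣ i * d) (m : ℕ) :
    conjProd K p e A i (d * m) = (conjProd K p e A i d) ^ m := by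
  induction m with
  | zero => simp [conjProd]
  | succ m ih =>
    have hdvd : n ∣ i * (d * m) := by
      rw [← mul_assoc]; exact hd.mul_right m
    rw [Nat.mul_succ, conjProd_add', ih, frob_id' K p e n hK _ hdvd, pow_succ]
    congr 1

end AuxStmt4

theorem stmt4 (p e n : ℕ) [Fact p.Prime] (he : 0 < e) (hn : 0 < n)
    (K : Type*) [Field K] [Fintype K] [CharP K p] (hK : Fintype.card K = p ^ (e * n))
    (A : Matrix (Fin 2) (Fin 2) K) (hA : A.det ≠ 0)
    (i : ℕ) (hi1 : 1 ≤ i) (hin : i ≤ n)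
    (t : ℕ) (ht : t = Nat.gcd i n)
    (C : Matrix (Fin 2) (Fin 2) K) (hC : C = conjProd K p e A i (n / t))
    (M : ℕ) (hM : IsLeast {m : ℕ | 0 < m ∧ ∃ c : K, c ≠ 0 ∧ C ^ m = c • (1 : Matrix (Fin 2) (Fin 2) K)} M) :
    -- the order of [A, σᵢ] in PΓL(2, qⁿ) equals (n/t) · ord([C]):
    IsLeast {k : ℕ | 0 < k ∧ n ∣ i * k ∧
      ∃ c : K, c ≠ 0 ∧ conjProd K p e A i k = c • (1 : Matrix (Fin 2) (Fin 2) K)}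
      ((n / t) * M) := by
  have ht0 : 0 < t := by
    rw [ht]; exact Nat.gcd_pos_of_pos_right i hn
  have hti : t ∣ i := ht ▸ Nat.gcd_dvd_left i n
  have htn : t ∣ n := ht ▸ Nat.gcd_dvd_right i n
  have h1 : 0 < n / t := Nat.div_pos (Nat.le_of_dvd hn htn) ht0
  have hnt : n ∣ i * (n / t) := by
    obtain ⟨u, hu⟩ := hti
    refine ⟨u, ?_⟩
    rw [hu, mul_comm t u, mul_assoc, Nat.mul_div_cancel' htn, mul_comm]
  have hco : Nat.Coprime (i / t) (n / t) := by
    rw [ht]; exact Nat.coprime_div_gcd_div_gcd (Nat.gcd_pos_of_pos_right i hn)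
  have hdvd_k : ∀ k : ℕ, n ∣ i * k → (n / t) ∣ k := by
    intro k hk
    have h2 : (n / t) ∣ (i / t) * k := by
      have h3 : (n / t) * t ∣ ((i / t) * k) * t := by
        rw [Nat.div_mul_cancel htn, mul_assoc, mul_comm k t, ← mul_assoc,
          Nat.div_mul_cancel hti]
        exact hk
      exact (Nat.mul_dvd_mul_iff_right ht0).mp h3
    exact (Nat.Coprime.dvd_of_dvd_mul_left hco.symm h2)
  obtain ⟨⟨hM0, cM, hcM0, hcM⟩, hMlb⟩ := hM
  constructor
  · refine ⟨Nat.mul_pos h1 hM0, ?_, cM, hcM0, ?_⟩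
    · rw [← mul_assoc]
      exact hnt.mul_right M
    · rw [conjProd_pow' K p e A n hK i (n / t) hnt M, ← hC]
      exact hcM
  · intro k hk
    obtain ⟨hk0, hkd, c, hc0, hkc⟩ := hk
    obtain ⟨m, rfl⟩ := hdvd_k k hkd
    have hm0 : 0 < m := by
      rcases Nat.eq_zero_or_pos m with h | h
      · simp [h] at hk0
      · exact h
    have hmem : 0 < m ∧ ∃ c : K, c ≠ 0 ∧ C ^ m = c • (1 : Matrix (Fin 2) (Fin 2) K) := by
      refine ⟨hm0, c, hc0, ?_⟩
      rw [hC, ← conjProd_pow' K p e A n hK i (n / t) hnt m]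
      exact hkc
    exact Nat.mul_le_mul_left (n / t) (hMlb hmem)
end

section
/- Let A ∈ GL(2, q^n), D = ord([A^*]) where A^* = A·σ_1(A)···σ_{n−1}(A), and r ≥ 1. If f is a monic irreducible polynomial over F_{q^n} of degree k > 2 dividing F_{A, nr, 1}, then k = D·s where s divides nr − 1 and gcd((nr−1)/s, D) = 1; in particular gcd(s, n) = 1. -/
open Polynomial
open Matrix

lemma aux_pow_iff (p : ℕ) [Fact p.Prime] {c k : ℕ} (hk : 0 < k)
    (K : Type*) [Field K] [Fintype K] [CharP K p] (hK : Fintype.card K = c)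
    (hcp : ∃ t, 0 < t ∧ c = p ^ t)
    (L : Type*) [Field L] [Fintype L] [Algebra K L]
    (α : L) (hgen : Algebra.adjoin K ({α} : Set L) = ⊤)
    (hcard : Fintype.card L = c ^ k)
    (j : ℕ) : α ^ c ^ j = α ↔ k ∣ j := by
  obtain ⟨t, ht, hct⟩ := hcp
  have hc2 : 2 ≤ c := by
    rw [← hK]; exact Fintype.one_lt_card
  haveI : CharP L p := charP_of_injective_algebraMap (algebraMap K L).injective p
  have hback : ∀ u : ℕ, k ∣ u → α ^ c ^ u = α := by
    rintro u ⟨v, rfl⟩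
    rw [pow_mul, ← hcard]
    exact FiniteField.pow_card_pow v α
  constructor
  · intro hj
    have hmod : α ^ c ^ (j % k) = α := by
      have h2 : α ^ c ^ j = (α ^ c ^ (k * (j / k))) ^ c ^ (j % k) := by
        rw [← pow_mul, ← pow_add, Nat.div_add_mod]
      rw [hback (k * (j / k)) ⟨_, rfl⟩, hj] at h2
      exact h2.symm
    by_contra hnd
    obtain ⟨j0, hj0def⟩ : ∃ j0, j % k = j0 := ⟨_, rfl⟩
    rw [hj0def] at hmod
    have hj0 : 0 < j0 := by
      rcases Nat.eq_zero_or_pos j0 with h | h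
      · exact absurd (Nat.dvd_of_mod_eq_zero (hj0def.trans h)) hnd
      · exact h
    have hjk : j0 < k := hj0def ▸ Nat.mod_lt _ hk
    have hexp : c ^ j0 = p ^ (t * j0) := by rw [hct, pow_mul]
    have hKfix : ∀ x : K, x ^ c ^ j0 = x := by
      intro x
      rw [← hK]
      exact FiniteField.pow_card_pow j0 x
    have hall : ∀ x : L, x ^ c ^ j0 = x := by
      intro x
      have hx : x ∈ Algebra.adjoin K ({α} : Set L) := by rw [hgen]; trivial
      induction hx using Algebra.adjoin_induction with
      | mem y hy => simp only [Set.mem_singleton_iff] at hy; subst hy; exact hmod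
      | algebraMap y => rw [← map_pow, hKfix]
      | add y z _ _ hy hz =>
          rw [hexp] at hy hz ⊢
          rw [add_pow_char_pow, hy, hz]
      | mul y z _ _ hy hz => rw [mul_pow, hy, hz]
    haveI : Fintype Lˣ := Fintype.ofFinite _
    obtain ⟨ξ, hξ⟩ := IsCyclic.exists_generator (α := Lˣ)
    have hord : orderOf ξ = Nat.card Lˣ := orderOf_eq_card_of_forall_mem_zpowers hξ
    have hξpow : ξ ^ c ^ j0 = ξ := Units.ext (by push_cast; exact hall ξ)
    have h1 : ξ ^ (c ^ j0 - 1) = 1 := by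
      have hcj : 1 ≤ c ^ j0 := Nat.one_le_pow _ _ (by omega)
      have := hξpow
      rw [show c ^ j0 = (c ^ j0 - 1) + 1 by omega, pow_succ] at this
      exact mul_right_cancel (by rw [this, one_mul])
    have hdvd : Nat.card Lˣ ∣ c ^ j0 - 1 := hord ▸ orderOf_dvd_of_pow_eq_one h1
    rw [Nat.card_units, Nat.card_eq_fintype_card, hcard] at hdvd
    have hle : c ^ k - 1 ≤ c ^ j0 - 1 := Nat.le_of_dvd
      (Nat.sub_pos_of_lt (lt_of_lt_of_le one_lt_two
        (le_trans hc2 (Nat.le_self_pow (by omega) c)))) hdvd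
    have : c ^ k ≤ c ^ j0 := by
      have h1k : 1 ≤ c ^ k := Nat.one_le_pow _ _ (by omega)
      have h1j : 1 ≤ c ^ j0 := Nat.one_le_pow _ _ (by omega)
      have h2 := Nat.add_le_add_right hle 1
      rwa [Nat.sub_add_cancel h1k, Nat.sub_add_cancel h1j] at h2
    have := (Nat.pow_le_pow_iff_right (by omega)).mp this
    omega
  · exact hback j

theorem stmt9 (p e n : ℕ) [Fact p.Prime] (he : 0 < e) (hn : 0 < n)
    (K : Type*) [Field K] [Fintype K] [CharP K p] (hK : Fintype.card K = p ^ (e * n))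
    (A : Matrix (Fin 2) (Fin 2) K) (hA : A.det ≠ 0)
    (D : ℕ) (hD : IsLeast {m : ℕ | 0 < m ∧ ∃ c : K, c ≠ 0 ∧
      (conjProd K p e A 1 n) ^ m = c • (1 : Matrix (Fin 2) (Fin 2) K)} D)
    (r : ℕ) (hr : 1 ≤ r)
    (k : ℕ) (hk : 2 < k)
    (f : K[X]) (hmon : f.Monic) (hirr : Irreducible f) (hdeg : f.natDegree = k)
    (hdvd : f ∣ FA K p e n A (n * r) 1) :
    ∃ s : ℕ, k = D * s ∧ s ∣ n * r - 1 ∧ Nat.gcd ((n * r - 1) / s) D = 1 ∧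
      Nat.gcd s n = 1 := by
  classical
  have hnr1 : 0 < n * r := Nat.mul_pos hn hr
  set m := n * r - 1 with hm
  obtain ⟨d, hd⟩ : ∃ d, n - 1 = d := ⟨_, rfl⟩
  -- the extension field L = K[x]/(f)
  haveI : Fact (Irreducible f) := ⟨hirr⟩
  set L := AdjoinRoot f with hLdef
  haveI : Module.Finite K L := PowerBasis.finite (AdjoinRoot.powerBasis hmon.ne_zero)
  haveI : Finite L := Module.finite_of_finite K
  haveI : Fintype L := Fintype.ofFinite L
  haveI : CharP L p := charP_of_injective_algebraMap (algebraMap K L).injective p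
  have hfr : Module.finrank K L = k := by
    rw [← hdeg, (AdjoinRoot.powerBasis hmon.ne_zero).finrank, AdjoinRoot.powerBasis_dim]
  have hcardL : Fintype.card L = (p ^ (e * n)) ^ k := by
    rw [← hK, Module.card_eq_pow_finrank (K := K) (V := L), hfr]
  set α : L := AdjoinRoot.root f with hα
  have hminp : minpoly K α = f := by
    rw [hα, AdjoinRoot.minpoly_root hmon.ne_zero, hmon.leadingCoeff, inv_one, Polynomial.C_1, mul_one]
  have key : ∀ j, α ^ (p ^ (e * n)) ^ j = α ↔ k ∣ j := fun j =>
    aux_pow_iff p (by omega) K hK ⟨e * n, Nat.mul_pos he hn, rfl⟩ L α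
      AdjoinRoot.adjoinRoot_eq_top hcardL j
  set ιa := algebraMap K L with hιa
  set σf : ℕ → (K →+* K) := frob K p e with hσ
  have hfrob_def : ∀ (a : ℕ) (x : K), σf a x = x ^ p ^ (e * a) := fun a x => rfl
  have hfrob_frob : ∀ (a b : ℕ) (x : K), σf a (σf b x) = σf (b + a) x := by
    intro a b x
    rw [hfrob_def, hfrob_def, hfrob_def, ← pow_mul, ← pow_add, ← Nat.mul_add]
  have hfrobK_pow : ∀ x : K, x ^ p ^ (e * n) = x := by
    intro x; rw [← hK]; exact FiniteField.pow_card x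
  have hfrob_add_n : ∀ (a : ℕ) (x : K), σf (a + n) x = σf a x := by
    intro a x
    rw [hfrob_def, hfrob_def, show e * (a + n) = e * n + e * a by ring, pow_add, pow_mul,
      hfrobK_pow]
  have hfrob_add_mul_n : ∀ (a t : ℕ) (x : K), σf (a + n * t) x = σf a x := by
    intro a t x
    induction t with
    | zero => simp
    | succ t ih => rw [show a + n * (t + 1) = a + n * t + n by ring, hfrob_add_n, ih]
  -- the matrices
  set B : ℕ → Matrix (Fin 2) (Fin 2) K := fun i => (A.map (σf (d + m * i)))ᵀ with hB
  set W : ℕ → Matrix (Fin 2) (Fin 2) K := fun j => ((List.range j).map B).prod with hW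
  have hWsucc : ∀ j, W (j + 1) = W j * B j := by
    intro j
    simp only [hW, List.range_succ, List.map_append, List.map_cons, List.map_nil,
      List.prod_append, List.prod_cons, List.prod_nil, mul_one]
  -- the basic relation E1
  have haev : aeval α (FA K p e n A (n * r) 1) = 0 := by
    obtain ⟨g, hg⟩ := hdvd
    have hf0 : aeval α f = 0 := by
      have h := minpoly.aeval K α
      rw [hminp] at h
      exact h
    simp only [hg, _root_.map_mul, hf0, zero_mul]
  have hC1 : conjProd K p e A 1 1 = A := by
    ext i j
    simp [conjProd, frob, iterateFrobenius_def, List.range_succ, Matrix.map_apply]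
  rw [FA, hC1] at haev
  simp only [FPoly, Polynomial.map_sub, Polynomial.map_add, Polynomial.map_mul,
    Polynomial.map_pow, Polynomial.map_C, Polynomial.map_X, _root_.map_sub, _root_.map_add, _root_.map_mul,
    _root_.map_pow, aeval_C, aeval_X] at haev
  rw [← hm, hd, ← hσ] at haev
  have E1 : α * (ιa (σf d (A 0 1)) * α ^ p ^ (e * m) + ιa (σf d (A 1 1))) =
      ιa (σf d (A 0 0)) * α ^ p ^ (e * m) + ιa (σf d (A 1 0)) := by
    linear_combination haev
  -- iterated relation
  have EJ : ∀ j, α * (ιa (W j 1 0) * α ^ p ^ (e * (m * j)) + ιa (W j 1 1)) =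
      ιa (W j 0 0) * α ^ p ^ (e * (m * j)) + ιa (W j 0 1) := by
    intro j
    induction j with
    | zero => simp [hW, Matrix.one_apply]
    | succ j ih =>
      have hNj := congrArg (⇑(iterateFrobenius L p (e * (m * j)))) E1
      simp only [_root_.map_add, _root_.map_mul, iterateFrobenius_def, ← _root_.map_pow, ← pow_mul] at hNj
      rw [show p ^ (e * m) * p ^ (e * (m * j)) = p ^ (e * (m * (j + 1))) from by
        rw [← pow_add]; congr 1; ring] at hNj
      have hσstep : ∀ x : K, σf d (x ^ p ^ (e * (m * j))) = σf (d + m * j) x := by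
        intro x
        rw [_root_.map_pow, ← hfrob_def (m * j) (σf d x), hfrob_frob]
      simp only [hσstep] at hNj
      rw [hWsucc]
      simp only [Matrix.mul_apply, Fin.sum_univ_two, hB, Matrix.transpose_apply,
        Matrix.map_apply, _root_.map_add, _root_.map_mul]
      linear_combination (ιa (σf (d + m * j) (A 0 1)) * α ^ p ^ (e * (m * (j + 1))) +
        ιa (σf (d + m * j) (A 1 1))) * ih - (α * ιa (W j 1 0) - ιa (W j 0 0)) * hNj
  -- periodicity of B and the product formula
  have hfun : ∀ a t : ℕ, ⇑(σf (a + n * t)) = ⇑(σf a) := fun a t =>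
    funext fun x => hfrob_add_mul_n a t x
  have hBper : ∀ i t, B (i + n * t) = B i := by
    intro i t
    simp only [hB]
    rw [show d + m * (i + n * t) = d + m * i + n * (m * t) from by ring, hfun]
  have hWadd : ∀ jt, W (n * jt + n) = W (n * jt) * W n := by
    intro jt
    simp only [hW, List.range_add, List.map_append, List.prod_append, List.map_map]
    congr 2
    apply List.map_congr_left
    intro x _
    simp only [Function.comp_apply]
    rw [show n * jt + x = x + n * jt by ring, hBper]
  have hWpow : ∀ j, W (n * j) = W n ^ j := by
    intro j
    induction j with
    | zero => simp [hW]
    | succ j ih => rw [show n * (j + 1) = n * j + n by ring, hWadd, ih, pow_succ]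
  have hm1 : m + 1 = n * r := by rw [hm]; exact Nat.succ_pred_eq_of_pos hnr1
  have hWn : W n = (conjProd K p e A 1 n)ᵀ := by
    simp only [hW]
    rw [conjProd, Matrix.transpose_list_prod, List.map_map]
    congr 1
    apply List.ext_getElem
    · simp
    · intro i h1 h2
      simp only [List.getElem_map, List.getElem_range, List.getElem_reverse, List.length_map,
        List.length_range, Function.comp_apply, one_mul]
      have hi : i < n := by simpa using h1
      simp only [hB, ← hσ]
      have h5 : m * i + i = n * r * i := by rw [← hm1]; ring
      have h7 : d + m * i = (n - 1 - i) + n * (r * i) := by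
        rw [show n * (r * i) = n * r * i from by ring]
        obtain ⟨u, hu⟩ : ∃ u, m * i = u := ⟨_, rfl⟩
        obtain ⟨v, hv⟩ : ∃ v, n * r * i = v := ⟨_, rfl⟩
        rw [hu, hv] at h5 ⊢
        omega
      rw [h7, hfun]
  set T := conjProd K p e A 1 n with hT
  have hWT : ∀ j, W (n * j) = (T ^ j)ᵀ := by
    intro j; rw [hWpow, hWn, ← Matrix.transpose_pow]
  -- determinant of T
  have hdetT : T.det ≠ 0 := by
    have hdet : T.det = ((List.range n).map fun j => (A.map (frob K p e (1 * j))).det).prod := by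
      rw [hT, conjProd]
      rw [show Matrix.det (((List.range n).map fun j => A.map (frob K p e (1 * j))).prod)
        = Matrix.detMonoidHom (((List.range n).map fun j => A.map (frob K p e (1 * j))).prod)
        from rfl, MonoidHom.map_list_prod, List.map_map]
      rfl
    rw [hdet]
    apply List.prod_ne_zero
    intro h0
    simp only [List.mem_map, List.mem_range] at h0
    obtain ⟨j', _, hj'⟩ := h0
    have h2 : (frob K p e (1 * j')) A.det = 0 := by
      rw [RingHom.map_det, RingHom.mapMatrix_apply]; exact hj'
    exact hA ((_root_.map_eq_zero _).mp h2)
  obtain ⟨⟨hDpos, c0, hc0, hTD⟩, hDlb⟩ := hD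
  -- divisibility by D of scalar powers
  have hdvdD : ∀ (j : ℕ) (c : K), c ≠ 0 →
      T ^ j = c • (1 : Matrix (Fin 2) (Fin 2) K) → D ∣ j := by
    intro j c hc hTj
    by_contra hnd
    have hmodpos : 0 < j % D := Nat.pos_of_ne_zero fun h => hnd (Nat.dvd_of_mod_eq_zero h)
    have hmlt : j % D < D := Nat.mod_lt _ hDpos
    have hTu : T ^ (D * (j / D)) = c0 ^ (j / D) • (1 : Matrix (Fin 2) (Fin 2) K) := by
      rw [pow_mul, hTD, _root_.smul_pow, one_pow]
    have hsplit : T ^ j = T ^ (D * (j / D)) * T ^ (j % D) := by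
      rw [← pow_add, Nat.div_add_mod]
    rw [hTj, hTu, Matrix.smul_mul, one_mul] at hsplit
    have hcc : c0 ^ (j / D) ≠ 0 := pow_ne_zero _ hc0
    have hTv : T ^ (j % D) = ((c0 ^ (j / D))⁻¹ * c) • (1 : Matrix (Fin 2) (Fin 2) K) := by
      have h2 := congrArg (fun M => (c0 ^ (j / D))⁻¹ • M) hsplit
      simp only [smul_smul] at h2
      rw [inv_mul_cancel₀ hcc, one_smul] at h2
      exact h2.symm
    have := hDlb ⟨hmodpos, _, mul_ne_zero (inv_ne_zero hcc) hc, hTv⟩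
    omega
  -- step (i): k ∣ m * D
  have hstep1 : α ^ (p ^ (e * n)) ^ (m * D) = α := by
    have h := EJ (n * D)
    rw [hWT D, hTD] at h
    have h10 : ((c0 • (1 : Matrix (Fin 2) (Fin 2) K))ᵀ) 1 0 = 0 := by
      simp [Matrix.one_apply]
    have h01 : ((c0 • (1 : Matrix (Fin 2) (Fin 2) K))ᵀ) 0 1 = 0 := by
      simp [Matrix.one_apply]
    have h00 : ((c0 • (1 : Matrix (Fin 2) (Fin 2) K))ᵀ) 0 0 = c0 := by
      simp [Matrix.one_apply]
    have h11 : ((c0 • (1 : Matrix (Fin 2) (Fin 2) K))ᵀ) 1 1 = c0 := by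
      simp [Matrix.one_apply]
    rw [h10, h01, h00, h11, _root_.map_zero] at h
    have h2 : ιa c0 * α = ιa c0 * α ^ p ^ (e * (m * (n * D))) := by linear_combination h
    have hZ := mul_left_cancel₀ ((_root_.map_ne_zero ιa).mpr hc0) h2
    rw [← pow_mul, show e * n * (m * D) = e * (m * (n * D)) from by ring]
    exact hZ.symm
  have hkmD : k ∣ m * D := (key _).mp hstep1
  -- step (ii)
  set s := Nat.gcd k m with hs
  have hs0 : 0 < s := Nat.gcd_pos_of_pos_left m (by omega)
  set k' := k / s with hk'
  set m' := m / s with hm'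
  have hsk : s ∣ k := Nat.gcd_dvd_left k m
  have hsm : s ∣ m := Nat.gcd_dvd_right k m
  have hkk' : k = s * k' := by rw [hk']; exact (Nat.mul_div_cancel' hsk).symm
  have hmm' : m = s * m' := by rw [hm']; exact (Nat.mul_div_cancel' hsm).symm
  have hk'0 : 0 < k' := Nat.div_pos (Nat.le_of_dvd (by omega) hsk) hs0
  have cop : Nat.Coprime k' m' := by
    rw [hk', hm', hs]
    exact Nat.coprime_div_gcd_div_gcd (hs ▸ hs0)
  have hkdvd : k ∣ m * k' := ⟨m', by rw [hkk', hmm']; ring⟩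
  have hfix2 : α ^ p ^ (e * (m * (n * k'))) = α := by
    have h := (key (m * k')).mpr hkdvd
    rw [← pow_mul, show e * n * (m * k') = e * (m * (n * k')) from by ring] at h
    exact h
  have hU := EJ (n * k')
  rw [hWT k', hfix2] at hU
  simp only [Matrix.transpose_apply] at hU
  set g : K[X] := C ((T ^ k') 0 1) * X ^ 2 + C ((T ^ k') 1 1 - (T ^ k') 0 0) * X
    - C ((T ^ k') 1 0) with hgdef
  have hgz : aeval α g = 0 := by
    simp only [hgdef, _root_.map_sub, _root_.map_add, _root_.map_mul, _root_.map_pow, aeval_C, aeval_X]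
    linear_combination hU
  have hg0 : g = 0 := by
    by_contra hne
    have hdvg : f ∣ g := hminp ▸ minpoly.dvd K α hgz
    have h1 := Polynomial.natDegree_le_of_dvd hdvg hne
    have h2 : g.natDegree ≤ 2 := by rw [hgdef]; compute_degree
    omega
  have e2 : (T ^ k') 0 1 = 0 := by
    have h := congrArg (fun q => Polynomial.coeff q 2) hg0
    simpa [hgdef, Polynomial.coeff_X, Polynomial.coeff_C] using h
  have e1 : (T ^ k') 1 1 = (T ^ k') 0 0 := by
    have h := congrArg (fun q => Polynomial.coeff q 1) hg0
    simp [hgdef, Polynomial.coeff_X, Polynomial.coeff_C] at h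
    linear_combination h
  have e0 : (T ^ k') 1 0 = 0 := by
    have h := congrArg (fun q => Polynomial.coeff q 0) hg0
    simpa [hgdef, Polynomial.coeff_X, Polynomial.coeff_C] using h
  have hscal : T ^ k' = ((T ^ k') 0 0) • (1 : Matrix (Fin 2) (Fin 2) K) := by
    ext i j
    fin_cases i <;> fin_cases j <;>
      simp [Matrix.one_apply, e2, e0, e1]
  have hTk0 : (T ^ k') 0 0 ≠ 0 := by
    intro h0
    have hdet0 : (T ^ k').det = 0 := by
      rw [Matrix.det_fin_two, e2, h0]; ring
    rw [Matrix.det_pow] at hdet0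
    exact hdetT ((pow_eq_zero_iff (by omega)).mp hdet0)
  have hDk' : D ∣ k' := hdvdD k' _ hTk0 hscal
  have hk'D : k' ∣ D := by
    have h9 : k' ∣ m' * D := by
      have h10 : s * k' ∣ s * (m' * D) := by
        rw [← hkk', show s * (m' * D) = s * m' * D from by ring, ← hmm']
        exact hkmD
      exact (Nat.mul_dvd_mul_iff_left hs0).mp h10
    exact cop.dvd_of_dvd_mul_left h9
  have hDeq : D = k' := Nat.dvd_antisymm hDk' hk'D
  refine ⟨s, ?_, ?_, ?_, ?_⟩
  · rw [hDeq, hkk']; ring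
  · exact hsm
  · rw [hDeq]
    exact cop.symm
  · have hg1 : Nat.gcd s n ∣ m := dvd_trans (Nat.gcd_dvd_left s n) hsm
    have hg2 : Nat.gcd s n ∣ n * r := Dvd.dvd.mul_right (Nat.gcd_dvd_right s n) r
    have hg3 := Nat.dvd_sub hg2 hg1
    rw [hm] at hg3
    rw [show n * r - (n * r - 1) = 1 from by
      obtain ⟨w, hw⟩ : ∃ w, n * r = w := ⟨_, rfl⟩
      rw [hw] at hnr1 ⊢
      omega] at hg3
    exact Nat.dvd_one.mp hg3
end

section
/- Every self-conjugate-reciprocal irreducible monic polynomial over F_{q^2} of degree greater than 2 has odd degree. -/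
open Polynomial

theorem stmt16 (p e : ℕ) [Fact p.Prime] (he : 0 < e)
    (K : Type*) [Field K] [Fintype K] [CharP K p] (hK : Fintype.card K = p ^ (e * 2))
    (f : K[X]) (hmon : f.Monic) (hirr : Irreducible f) (h0 : f.coeff 0 ≠ 0)
    (hscrim : C (f.coeff 0)⁻¹ * f.reverse = f.map (iterateFrobenius K p e))
    (hdeg : 2 < f.natDegree) :
    Odd f.natDegree := by
  classical
  haveI := Fact.mk hirr
  have hp1 : 1 < p := (Fact.out : p.Prime).one_lt
  set n := f.natDegree with hn
  set q : ℕ := p ^ e with hq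
  set Q : ℕ := p ^ (e * 2) with hQdef
  have hQ : Q = q ^ 2 := by rw [hQdef, hq, pow_mul]
  have hQq : Q = q * q := by rw [hQ, sq]
  have hq1 : 1 < q := Nat.one_lt_pow he.ne' hp1
  have hQ1 : 1 < Q := by rw [hQq]; exact lt_of_lt_of_le hq1 (Nat.le_mul_of_pos_left q (by omega))
  have hn0 : 0 < n := by omega
  set L := AdjoinRoot f with hL
  let pb := AdjoinRoot.powerBasis (K := K) hmon.ne_zero
  haveI : Fintype L := Module.fintypeOfFintype pb.basis
  haveI : CharP L p := charP_of_injective_algebraMap (algebraMap K L).injective p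
  have hfinrank : Module.finrank K L = n := by
    rw [pb.finrank, AdjoinRoot.powerBasis_dim]
  have hcardL : Fintype.card L = Q ^ n := by
    rw [Module.card_eq_pow_finrank (K := K) (V := L), hfinrank, hK]
  set α : L := AdjoinRoot.root f with hαdef
  have hroot : aeval α f = 0 := by
    rw [aeval_def, AdjoinRoot.algebraMap_eq]; exact AdjoinRoot.eval₂_root f
  have hα0 : α ≠ 0 := by
    intro h
    apply h0
    have h2 : aeval α f = algebraMap K L (f.coeff 0) := by
      rw [h, aeval_def, eval₂_at_zero]
    rw [hroot] at h2
    exact ((_root_.map_eq_zero (algebraMap K L)).mp h2.symm)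
  -- The key fixed-point property of Q-th powers on K
  have hfix : ∀ k : K, algebraMap K L k ^ Q = algebraMap K L k := by
    intro k
    rw [← map_pow]
    congr 1
    have := FiniteField.pow_card k
    rwa [hK] at this
  have hcomp2 : (iterateFrobenius L p (e * 2)).comp (algebraMap K L) = algebraMap K L := by
    ext k
    simpa [iterateFrobenius_def] using hfix k
  have hF2 : ∀ x : L, iterateFrobenius L p (e * 2) x = x ^ Q := fun x => rfl
  -- aeval at Q-th power
  have hQpow : ∀ x : L, aeval (x ^ Q) f = (aeval x f) ^ Q := by
    intro x
    have h1 := hom_eval₂ f (algebraMap K L) (iterateFrobenius L p (e * 2)) x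
    rw [hcomp2, hF2, hF2] at h1
    rw [aeval_def, aeval_def, ← h1]
  have hrootpow : ∀ j : ℕ, aeval (α ^ Q ^ j) f = 0 := by
    intro j
    induction j with
    | zero => simpa using hroot
    | succ j ih =>
      have : α ^ Q ^ (j + 1) = (α ^ Q ^ j) ^ Q := by
        rw [pow_succ, pow_mul]
      rw [this, hQpow, ih, zero_pow (by omega)]
  -- β = α^{-q} is a root of f
  set β : L := α⁻¹ ^ q with hβdef
  have hβroot : aeval β f = 0 := by
    have hxne : α ^ Q ≠ 0 := pow_ne_zero _ hα0
    letI : Invertible (α ^ Q) := invertibleOfNonzero hxne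
    have hrev : aeval (⅟(α ^ Q)) f.reverse = 0 := by
      rw [aeval_def, eval₂_reverse_eq_zero_iff]
      have := hrootpow 1
      rwa [pow_one, aeval_def] at this
    have hLHS : aeval (⅟(α ^ Q)) (C (f.coeff 0)⁻¹ * f.reverse) = 0 := by
      rw [map_mul, hrev, mul_zero]
    have hRHS := congrArg (aeval (⅟(α ^ Q))) hscrim
    rw [hLHS] at hRHS
    -- rewrite RHS as Frobenius of aeval β f
    have hcomp1 : (algebraMap K L).comp (iterateFrobenius K p e)
        = (iterateFrobenius L p e).comp (algebraMap K L) := by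
      ext k
      simp [iterateFrobenius_def, map_pow]
    have hFβ : iterateFrobenius L p e β = ⅟(α ^ Q) := by
      rw [invOf_eq_inv, iterateFrobenius_def, hβdef, ← pow_mul, ← hq, ← hQq, inv_pow]
    have h2 : aeval (⅟(α ^ Q)) (f.map (iterateFrobenius K p e))
        = iterateFrobenius L p e (aeval β f) := by
      rw [aeval_def, eval₂_map, hcomp1, aeval_def, hom_eval₂, hFβ]
    rw [h2] at hRHS
    exact (iterateFrobenius L p e).injective (by rw [← hRHS, map_zero])
  -- f splits as the product over the Frobenius orbit of α
  set u : ℕ → L[X] := fun j => X - C (α ^ Q ^ j) with hu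
  have huj : ∀ j, u j = X - C (α ^ Q ^ j) := fun j => by rw [hu]
  set g : L[X] := ∏ j ∈ Finset.range n, u j with hg
  have hαQn : α ^ Q ^ n = α := by
    have := FiniteField.pow_card α
    rwa [hcardL] at this
  have hun : u n = u 0 := by rw [huj, huj, hαQn, pow_zero, pow_one]
  have hgmonic : g.Monic := monic_prod_of_monic _ _ fun j _ => monic_X_sub_C _
  have hdeg1 : ∀ j ∈ Finset.range n, (u j).natDegree = 1 := fun j _ => by
    rw [huj]; exact natDegree_X_sub_C _
  have hgdeg : g.natDegree = n := by
    rw [hg, natDegree_prod _ _ (fun j _ => huj j ▸ X_sub_C_ne_zero (α ^ Q ^ j)),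
      Finset.sum_congr rfl hdeg1, Finset.sum_const, smul_eq_mul, mul_one, Finset.card_range]
  have hgmap : g.map (iterateFrobenius L p (e * 2)) = g := by
    have h1 : g.map (iterateFrobenius L p (e * 2)) = ∏ j ∈ Finset.range n, u (j + 1) := by
      rw [hg, Polynomial.map_prod]
      refine Finset.prod_congr rfl fun j _ => ?_
      rw [huj, huj]
      simp only [Polynomial.map_sub, map_X, map_C, hF2]
      rw [← pow_mul, ← pow_succ]
    have h2 : (∏ j ∈ Finset.range n, u (j + 1)) * u 0
        = (∏ j ∈ Finset.range n, u j) * u 0 := by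
      rw [← Finset.prod_range_succ', Finset.prod_range_succ, hun]
    have h3 : (∏ j ∈ Finset.range n, u (j + 1)) = ∏ j ∈ Finset.range n, u j :=
      mul_right_cancel₀ (huj 0 ▸ X_sub_C_ne_zero _) h2
    rw [h1, h3, hg]
  have hgfixcoeff : ∀ i : ℕ, g.coeff i ^ Q = g.coeff i := by
    intro i
    have := congrArg (fun P : L[X] => P.coeff i) hgmap
    simpa [coeff_map, hF2] using this
  -- elements fixed by x ↦ x^Q are in the image of K
  have hrange : ∀ x : L, x ^ Q = x → x ∈ Set.range (algebraMap K L) := by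
    intro x hx
    set P : L[X] := X ^ Q - X with hP
    have hPne : P ≠ 0 := FiniteField.X_pow_card_sub_X_ne_zero L hQ1
    have hProot : ∀ y : L, y ^ Q = y → y ∈ P.roots.toFinset := by
      intro y hy
      rw [Multiset.mem_toFinset, mem_roots hPne]
      simp [hP, IsRoot.def, hy]
    set T : Finset L := Finset.univ.image (algebraMap K L) with hT
    have hTsub : T ⊆ P.roots.toFinset := by
      intro y hy
      rw [hT, Finset.mem_image] at hy
      obtain ⟨k, -, rfl⟩ := hy
      exact hProot _ (hfix k)
    have hTcard : T.card = Q := by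
      rw [hT, Finset.card_image_of_injective _ (algebraMap K L).injective,
        Finset.card_univ, hK]
    have hrootscard : P.roots.toFinset.card ≤ Q := by
      calc P.roots.toFinset.card ≤ Multiset.card P.roots := P.roots.toFinset_card_le
        _ ≤ P.natDegree := P.card_roots'
        _ = Q := FiniteField.X_pow_card_sub_X_natDegree_eq L hQ1
    have hTeq : T = P.roots.toFinset :=
      Finset.eq_of_subset_of_card_le hTsub (by omega)
    have : x ∈ T := by rw [hTeq]; exact hProot x hx
    rw [hT, Finset.mem_image] at this
    obtain ⟨k, -, hk⟩ := this
    exact ⟨k, hk⟩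
  -- lift g to K[X]
  have hglifts : g ∈ Polynomial.lifts (algebraMap K L) := by
    rw [Polynomial.lifts_iff_coeff_lifts]
    intro i
    exact hrange _ (hgfixcoeff i)
  obtain ⟨g₀, hg₀map, hg₀deg, hg₀monic⟩ :=
    Polynomial.lifts_and_degree_eq_and_monic hglifts hgmonic
  have hαg : aeval α g₀ = 0 := by
    rw [aeval_def, eval₂_eq_eval_map, hg₀map, hg, eval_prod]
    refine Finset.prod_eq_zero (Finset.mem_range.mpr hn0) ?_
    simp [hu]
  have hminpoly : minpoly K α = f := (minpoly.eq_of_irreducible_of_monic hirr hroot hmon).symm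
  have hfdvd : f ∣ g₀ := hminpoly ▸ minpoly.dvd K α hαg
  have hg₀deg' : g₀.natDegree = n := by
    have := natDegree_eq_of_degree_eq hg₀deg
    rwa [hgdeg] at this
  have hfg₀ : f = g₀ := by
    obtain ⟨c, hc⟩ := hfdvd
    have hc0 : c ≠ 0 := by
      intro h
      rw [h, mul_zero] at hc
      exact hg₀monic.ne_zero hc
    have hcdeg : c.natDegree = 0 := by
      have := hc ▸ hg₀deg'
      rw [natDegree_mul hmon.ne_zero hc0] at this
      omega
    have hclead : c.leadingCoeff = 1 := by
      have := congrArg leadingCoeff hc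
      rw [leadingCoeff_mul, hmon.leadingCoeff, one_mul, hg₀monic.leadingCoeff] at this
      exact this.symm
    have hc1 : c = 1 := by
      have h4 : c = C c.leadingCoeff := by
        rw [leadingCoeff, hcdeg]
        exact eq_C_of_natDegree_eq_zero hcdeg
      rw [h4, hclead, map_one]
    rw [hc, hc1, mul_one]
  have hfmap : f.map (algebraMap K L) = g := by
    have h5 := hg₀map
    rw [← hfg₀] at h5
    exact h5
  -- β is in the Frobenius orbit of α
  obtain ⟨j, hjn, hj⟩ : ∃ j, j ∈ Finset.range n ∧ β = α ^ Q ^ j := by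
    have : eval β g = 0 := by
      rw [← hfmap, ← eval₂_eq_eval_map, ← aeval_def, hβroot]
    rw [hg, eval_prod, Finset.prod_eq_zero_iff] at this
    obtain ⟨j, hj1, hj2⟩ := this
    refine ⟨j, hj1, ?_⟩
    rw [huj] at hj2
    simp only [eval_sub, eval_X, eval_C, sub_eq_zero] at hj2
    exact hj2
  -- hence α^(Q^j + q) = 1
  have hkey : α ^ (Q ^ j + q) = 1 := by
    rw [pow_add, ← hj, hβdef, ← mul_pow, inv_mul_cancel₀ hα0, one_pow]
  -- produce an odd s with α^(q^s + 1) = 1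
  obtain ⟨s, hsodd, hskey⟩ : ∃ s : ℕ, Odd s ∧ α ^ (q ^ s + 1) = 1 := by
    rcases Nat.eq_zero_or_pos j with hj0 | hjpos
    · refine ⟨1, odd_one, ?_⟩
      have : Q ^ j + q = q ^ 1 + 1 := by rw [hj0]; simp [add_comm]
      rwa [this] at hkey
    · refine ⟨2 * j - 1, ⟨j - 1, by omega⟩, ?_⟩
      have hexp : Q ^ j + q = q * (q ^ (2 * j - 1) + 1) := by
        rw [hQ, ← pow_mul, mul_add, mul_one, ← pow_succ']
        congr 2
        omega
      rw [hexp, pow_mul'] at hkey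
      -- (x)^q = 1 in char p with q = p^e implies x = 1
      have hsub : (α ^ (q ^ (2 * j - 1) + 1) - 1) ^ q = 0 := by
        rw [hq, sub_pow_char_pow, hkey, one_pow, sub_self]
      have := pow_eq_zero_iff (n := q) (by omega) |>.mp hsub
      rwa [sub_eq_zero] at this
  -- α^(q^(2s)) = α
  have hαfix : α ^ Q ^ s = α := by
    have h1 : α ^ q ^ s * α = 1 := by
      rw [← pow_succ]; exact hskey
    have h2 : α ^ q ^ s = α⁻¹ := eq_inv_of_mul_eq_one_left h1
    have hexp2 : Q ^ s = q ^ s * q ^ s := by rw [hQq, mul_pow]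
    have h3 : α ^ Q ^ s = (α ^ q ^ s) ^ q ^ s := by rw [hexp2, pow_mul]
    rw [h3, h2, inv_pow, h2, inv_inv]
  -- the Frobenius-squared algebra automorphism τ
  set ψ : L →ₐ[K] L :=
    { toRingHom := iterateFrobenius L p (e * 2)
      commutes' := fun k => by simpa [iterateFrobenius_def] using hfix k } with hψ
  have hψapply : ∀ x : L, ψ x = x ^ Q := fun x => rfl
  have hψbij : Function.Bijective ψ :=
    Finite.injective_iff_bijective.mp (iterateFrobenius L p (e * 2)).injective
  set τ : L ≃ₐ[K] L := AlgEquiv.ofBijective ψ hψbij with hτ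
  have hτapply : ∀ x : L, τ x = x ^ Q := fun x => rfl
  have hτpow : ∀ (m : ℕ) (x : L), (τ ^ m) x = x ^ Q ^ m := by
    intro m
    induction m with
    | zero => intro x; simp
    | succ m ih =>
      intro x
      rw [pow_succ', AlgEquiv.mul_apply, hτapply, ih, ← pow_mul, ← pow_succ]
  have hτeq1 : ∀ m : ℕ, α ^ Q ^ m = α → τ ^ m = 1 := by
    intro m hm
    have hhom : (τ ^ m : L ≃ₐ[K] L).toAlgHom = (AlgEquiv.refl : L ≃ₐ[K] L).toAlgHom := by
      apply AdjoinRoot.algHom_ext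
      show (τ ^ m) (AdjoinRoot.root f) = AdjoinRoot.root f
      rw [← hαdef, hτpow, hm]
    ext x
    have := congrArg (fun h : L →ₐ[K] L => h x) hhom
    simpa using this
  have hτn : τ ^ n = 1 := by
    apply hτeq1
    exact hαQn
  have hτs : τ ^ s = 1 := hτeq1 s hαfix
  have hfin : IsOfFinOrder τ := isOfFinOrder_iff_pow_eq_one.mpr ⟨n, hn0, hτn⟩
  have hdvd_n : orderOf τ ∣ n := orderOf_dvd_of_pow_eq_one hτn
  have hdvd_s : orderOf τ ∣ s := orderOf_dvd_of_pow_eq_one hτs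
  -- orderOf τ = n
  have hord : orderOf τ = n := by
    set m := orderOf τ with hm
    have hm0 : 0 < m := hfin.orderOf_pos
    have hτm : τ ^ m = 1 := pow_orderOf_eq_one τ
    have hallfix : ∀ x : L, x ^ Q ^ m = x := by
      intro x
      have := congrArg (fun h : L ≃ₐ[K] L => h x) hτm
      simpa [hτpow] using this
    have hQm1 : 1 < Q ^ m := Nat.one_lt_pow hm0.ne' hQ1
    -- every element of L is a root of X^(Q^m) - X
    have hcard_le : Fintype.card L ≤ Q ^ m := by
      set P : L[X] := X ^ Q ^ m - X with hP
      have hPne : P ≠ 0 := FiniteField.X_pow_card_sub_X_ne_zero L hQm1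
      have hsub : (Finset.univ : Finset L) ⊆ P.roots.toFinset := by
        intro y _
        rw [Multiset.mem_toFinset, mem_roots hPne]
        simp [hP, IsRoot.def, hallfix y]
      calc Fintype.card L = (Finset.univ : Finset L).card := Finset.card_univ.symm
        _ ≤ P.roots.toFinset.card := Finset.card_le_card hsub
        _ ≤ Multiset.card P.roots := P.roots.toFinset_card_le
        _ ≤ P.natDegree := P.card_roots'
        _ = Q ^ m := FiniteField.X_pow_card_sub_X_natDegree_eq L hQm1
    rw [hcardL] at hcard_le
    have hnm : n ≤ m := (Nat.pow_le_pow_iff_right (by omega)).mp hcard_le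
    have hmn : m ≤ n := Nat.le_of_dvd hn0 hdvd_n
    omega
  rw [hord] at hdvd_s
  -- n divides the odd number s, so n is odd
  rcases hsodd with ⟨k, hk⟩
  rcases Nat.even_or_odd n with hev | hodd
  · exfalso
    have h2s : 2 ∣ s := dvd_trans hev.two_dvd hdvd_s
    obtain ⟨t, ht⟩ := h2s
    omega
  · exact hodd
end

section
/- Let n > 1 be odd. A monic irreducible polynomial f ∈ F_{q^2}[x] of degree n with f(0) ≠ 0 is self-conjugate-reciprocal if and only if f divides a self-reciprocal monic irreducible polynomial G ∈ F_q[x] of degree 2n. -/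
open Polynomial

/-- An irreducible polynomial of odd degree `n > 1` cannot be self-reciprocal. -/
private lemma aux_no_selfrecip {K : Type*} [Field K] {f : K[X]} {n : ℕ} (hn : 1 < n)
    (hodd : Odd n) (hmon : f.Monic) (hirr : Irreducible f) (hdeg : f.natDegree = n)
    (h0 : f.coeff 0 ≠ 0) (hsr : C (f.coeff 0)⁻¹ * f.reverse = f) : False := by
  have hroot : ∀ x : K, f.eval x ≠ 0 := by
    intro x hx
    have h1 := degree_eq_one_of_irreducible_of_root hirr hx
    rw [degree_eq_natDegree hmon.ne_zero, hdeg] at h1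
    have : n = 1 := by exact_mod_cast h1
    omega
  -- the coefficient relation
  have hrel : ∀ i, i ≤ n → f.coeff i = (f.coeff 0)⁻¹ * f.coeff (n - i) := by
    intro i hi
    have := congrArg (fun q : K[X] => q.coeff i) hsr
    simpa [coeff_C_mul, coeff_reverse, hdeg, revAt_le hi, eq_comm] using this
  have hrefl : ∀ g : ℕ → K,
      ∑ i ∈ Finset.range (n + 1), g (n - i) = ∑ i ∈ Finset.range (n + 1), g i := by
    intro g
    have := Finset.sum_range_reflect g (n + 1)
    simpa [Nat.add_sub_cancel] using this
  set S := ∑ i ∈ Finset.range (n + 1), f.coeff i with hSdef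
  have hS1 : f.eval 1 = S := by
    rw [eval_eq_sum_range, hdeg]; simp [hSdef]
  have hSne : S ≠ 0 := by rw [← hS1]; exact hroot 1
  have hS2 : (f.coeff 0)⁻¹ * S = 1 * S := by
    rw [one_mul]
    have : S = (f.coeff 0)⁻¹ * S := by
      conv_lhs => rw [hSdef]
      calc ∑ i ∈ Finset.range (n + 1), f.coeff i
          = ∑ i ∈ Finset.range (n + 1), (f.coeff 0)⁻¹ * f.coeff (n - i) := by
            refine Finset.sum_congr rfl fun i hi => ?_
            rw [Finset.mem_range] at hi
            exact hrel i (by omega)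
        _ = (f.coeff 0)⁻¹ * ∑ i ∈ Finset.range (n + 1), f.coeff (n - i) := by
            rw [Finset.mul_sum]
        _ = (f.coeff 0)⁻¹ * S := by rw [hrefl fun i => f.coeff i]
    exact this.symm
  have hf0inv : (f.coeff 0)⁻¹ = 1 := mul_right_cancel₀ hSne hS2
  have hf0 : f.coeff 0 = 1 := by rwa [inv_eq_one] at hf0inv
  have hrel' : ∀ i, i ≤ n → f.coeff i = f.coeff (n - i) := by
    intro i hi
    have := hrel i hi
    rwa [hf0inv, one_mul] at this
  -- evaluation at -1 : get characteristic 2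
  set T := ∑ i ∈ Finset.range (n + 1), f.coeff i * (-1 : K) ^ i with hTdef
  have hT1 : f.eval (-1) = T := by rw [eval_eq_sum_range, hdeg]
  have hTne : T ≠ 0 := by rw [← hT1]; exact hroot (-1)
  have hTT : T = -T := by
    conv_lhs => rw [hTdef, ← hrefl fun i => f.coeff i * (-1 : K) ^ i]
    rw [← Finset.sum_neg_distrib]
    refine Finset.sum_congr rfl fun i hi => ?_
    rw [Finset.mem_range] at hi
    have hi' : i ≤ n := by omega
    have e1 : ((-1 : K)) ^ (n - i) * (-1 : K) ^ i = -1 := by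
      rw [← pow_add, Nat.sub_add_cancel hi']
      exact Odd.neg_one_pow hodd
    have e2 : ((-1 : K)) ^ i * (-1 : K) ^ i = 1 := by
      rw [← pow_add]
      exact Even.neg_one_pow ⟨i, rfl⟩
    have e3 : ((-1 : K)) ^ (n - i) = -(-1 : K) ^ i := by
      calc ((-1 : K)) ^ (n - i) = ((-1 : K)) ^ (n - i) * ((-1 : K) ^ i * (-1 : K) ^ i) := by
            rw [e2, mul_one]
        _ = (((-1 : K)) ^ (n - i) * (-1 : K) ^ i) * (-1 : K) ^ i := by ring
        _ = -(-1 : K) ^ i := by rw [e1]; ring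
    rw [← hrel' i hi', e3]
    ring
  have h2 : (1 + 1 : K) = 0 := by
    have : (1 + 1 : K) * T = 0 := by
      have := hTT
      ring_nf
      linear_combination this
    rcases mul_eq_zero.mp this with h | h
    · exact h
    · exact absurd h hTne
  -- now the sum of all coefficients vanishes, contradiction
  apply hSne
  rw [hSdef]
  refine Finset.sum_involution (fun i _ => n - i) ?_ ?_ ?_ ?_
  · intro a ha
    rw [Finset.mem_range] at ha
    show f.coeff a + f.coeff (n - a) = 0
    rw [← hrel' a (by omega)]
    calc f.coeff a + f.coeff a = (1 + 1) * f.coeff a := by ring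
      _ = 0 := by rw [h2, zero_mul]
  · intro a ha _
    rw [Finset.mem_range] at ha
    show n - a ≠ a
    obtain ⟨k, hk⟩ := hodd
    omega
  · intro a ha
    rw [Finset.mem_range] at ha
    show n - a ∈ Finset.range (n + 1)
    rw [Finset.mem_range]
    omega
  · intro a ha
    rw [Finset.mem_range] at ha
    show n - (n - a) = a
    omega

/-- An element of a finite extension fixed by the `q`-power map lies in the image
of the subfield of cardinality `q`. -/
private lemma aux_mem_range {p e : ℕ} {F K : Type*} [Field F] [Fintype F] [Field K] [Fintype K]
    [Algebra F K] (hF : Fintype.card F = p ^ e) (hq : 1 < p ^ e) (c : K)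
    (hc : c ^ p ^ e = c) : c ∈ Set.range (algebraMap F K) := by
  classical
  set P : K[X] := X ^ p ^ e - X with hPdef
  have hP0 : P ≠ 0 := FiniteField.X_pow_card_sub_X_ne_zero K hq
  have hPdeg : P.natDegree = p ^ e := FiniteField.X_pow_card_sub_X_natDegree_eq K hq
  set S : Finset K := Finset.univ.image (algebraMap F K) with hSdef
  have hScard : S.card = p ^ e := by
    rw [hSdef, Finset.card_image_of_injective _ (algebraMap F K).injective,
      Finset.card_univ, hF]
  have hsub : S ⊆ P.roots.toFinset := by
    intro y hy
    rw [hSdef, Finset.mem_image] at hy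
    obtain ⟨x, -, rfl⟩ := hy
    rw [Multiset.mem_toFinset, mem_roots hP0]
    show P.eval _ = 0
    rw [hPdef]
    simp only [eval_sub, eval_pow, eval_X]
    rw [← map_pow, ← hF, FiniteField.pow_card, sub_self]
  have hcard2 : P.roots.toFinset.card ≤ p ^ e := by
    calc P.roots.toFinset.card ≤ Multiset.card P.roots := Multiset.toFinset_card_le _
      _ ≤ P.natDegree := card_roots' P
      _ = p ^ e := hPdeg
  have heq : S = P.roots.toFinset :=
    Finset.eq_of_subset_of_card_le hsub (by rw [hScard]; exact hcard2)
  have hcroot : c ∈ P.roots.toFinset := by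
    rw [Multiset.mem_toFinset, mem_roots hP0]
    show P.eval c = 0
    rw [hPdef]
    simp only [eval_sub, eval_pow, eval_X]
    rw [hc, sub_self]
  rw [← heq, hSdef, Finset.mem_image] at hcroot
  obtain ⟨x, -, hx⟩ := hcroot
  exact ⟨x, hx⟩

/-- A monic divisor of a monic polynomial with the same degree equals it. -/
private lemma aux_monic_dvd_eq {K : Type*} [Field K] {a b : K[X]} (ha : a.Monic) (hb : b.Monic)
    (hdvd : a ∣ b) (hdeg : b.natDegree ≤ a.natDegree) : a = b := by
  obtain ⟨c, rfl⟩ := hdvd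
  have hc0 : c ≠ 0 := fun h => hb.ne_zero (by rw [h, mul_zero])
  have hdegs : a.natDegree + c.natDegree ≤ a.natDegree := by
    rw [← natDegree_mul ha.ne_zero hc0]; exact hdeg
  have hcdeg : c.natDegree = 0 := by omega
  have hclead : c.coeff 0 = 1 := by
    have := hb.leadingCoeff
    rw [leadingCoeff_mul, ha.leadingCoeff, one_mul] at this
    rwa [leadingCoeff, hcdeg] at this
  rw [eq_C_of_natDegree_eq_zero hcdeg, hclead, C_1, mul_one]

theorem stmt17 (p e : ℕ) [Fact p.Prime] (he : 0 < e)
    (F : Type*) [Field F] [Fintype F] [CharP F p] (hF : Fintype.card F = p ^ e)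
    (K : Type*) [Field K] [Fintype K] [CharP K p] (hK : Fintype.card K = p ^ (e * 2))
    [Algebra F K]
    (n : ℕ) (hn : 1 < n) (hodd : Odd n)
    (f : K[X]) (hmon : f.Monic) (hirr : Irreducible f) (hdeg : f.natDegree = n)
    (h0 : f.coeff 0 ≠ 0) :
    C (f.coeff 0)⁻¹ * f.reverse = f.map (iterateFrobenius K p e) ↔
      ∃ G : F[X], G.Monic ∧ Irreducible G ∧ G.natDegree = 2 * n ∧ G.coeff 0 ≠ 0 ∧
        C (G.coeff 0)⁻¹ * G.reverse = G ∧ f ∣ G.map (algebraMap F K) := by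
  classical
  set σ : K →+* K := iterateFrobenius K p e with hσdef
  set φ : F →+* K := algebraMap F K with hφdef
  have hq1 : 1 < p ^ e := Nat.one_lt_pow he.ne' (Fact.out (p := p.Prime)).one_lt
  have φinj : Function.Injective φ := φ.injective
  have σinj : Function.Injective σ := σ.injective
  have σdef : ∀ a : K, σ a = a ^ p ^ e := fun a => iterateFrobenius_def p e a
  have hfix : ∀ x : F, σ (φ x) = φ x := by
    intro x
    rw [σdef, ← map_pow, ← hF, FiniteField.pow_card]
  have hσσ : ∀ a : K, σ (σ a) = a := by
    intro a
    rw [σdef, σdef, ← pow_mul, ← pow_add, ← two_mul, mul_comm 2 e, ← hK, FiniteField.pow_card]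
  have hmapφσ : ∀ A : F[X], (A.map φ).map σ = A.map φ := by
    intro A
    rw [Polynomial.map_map]
    congr 1
    ext x
    simp [RingHom.comp_apply, hfix]
  have hmapσσ : ∀ P : K[X], (P.map σ).map σ = P := by
    intro P
    rw [Polynomial.map_map]
    have : σ.comp σ = RingHom.id K := RingHom.ext hσσ
    rw [this, Polynomial.map_id]
  -- the frobenius as a ring equivalence
  have σsurj : Function.Surjective σ := fun a => ⟨σ a, hσσ a⟩
  let σe : K ≃+* K := RingEquiv.ofBijective σ ⟨σinj, σsurj⟩
  have hσe : ∀ g : K[X], g.map (σe : K →+* K) = g.map σ := fun g => rfl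
  have hirrmapσ : ∀ g : K[X], Irreducible g → Irreducible (g.map σ) := by
    intro g hg
    have := hg.map (Polynomial.mapEquiv σe)
    simpa [Polynomial.mapEquiv_apply, hσe] using this
  -- basic facts about f.map σ
  have hfσmon : (f.map σ).Monic := hmon.map σ
  have hfσdeg : (f.map σ).natDegree = n := by
    rw [natDegree_map_eq_of_injective σinj, hdeg]
  have hfσirr : Irreducible (f.map σ) := hirrmapσ f hirr
  have hfσ0 : (f.map σ).coeff 0 ≠ 0 := by
    rw [coeff_map]
    intro h
    exact h0 (σinj (by rw [h, map_zero]))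
  have hprime : Prime f := hirr.prime
  have hrevmapσ : ∀ g : K[X], (g.reverse).map σ = (g.map σ).reverse := by
    intro g
    rw [reverse, reverse, ← reflect_map, natDegree_map_eq_of_injective σinj]
  have hrevmapφ : ∀ g : F[X], (g.reverse).map φ = (g.map φ).reverse := by
    intro g
    rw [reverse, reverse, ← reflect_map, natDegree_map_eq_of_injective φinj]
  have hself : C (f.coeff 0)⁻¹ * f.reverse = f → False := fun h =>
    aux_no_selfrecip hn hodd hmon hirr hdeg h0 h
  have hcop : f ≠ f.map σ → IsCoprime f (f.map σ) := by
    intro hne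
    refine (hirr.coprime_iff_not_dvd).mpr fun hdvd => hne ?_
    exact aux_monic_dvd_eq hmon hfσmon hdvd (by rw [hfσdeg, hdeg])
  constructor
  · -- forward direction
    intro hscr
    have hne : f ≠ f.map σ := by
      intro hEq
      exact hself (by rw [hscr, ← hEq])
    set P : K[X] := f * f.map σ with hPdef
    have hPmon : P.Monic := hmon.mul hfσmon
    have hPfix : P.map σ = P := by
      rw [hPdef, Polynomial.map_mul, hmapσσ f, mul_comm]
    have hlift : P ∈ lifts φ := by
      rw [lifts_iff_coeff_lifts]
      intro i
      have hfixc : (P.coeff i) ^ p ^ e = P.coeff i := by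
        rw [← σdef]
        conv_rhs => rw [← hPfix]
        rw [coeff_map]
      exact aux_mem_range hF hq1 _ hfixc
    obtain ⟨G, hGmap, hGdeg', hGmon⟩ := lifts_and_natDegree_eq_and_monic hlift hPmon
    have hPdeg : P.natDegree = 2 * n := by
      rw [hPdef, natDegree_mul hmon.ne_zero hfσmon.ne_zero, hdeg, hfσdeg]; ring
    have hGdeg : G.natDegree = 2 * n := by rw [hGdeg', hPdeg]
    have hGcoeff : φ (G.coeff 0) = f.coeff 0 * (f.map σ).coeff 0 := by
      rw [← coeff_map, hGmap, hPdef, mul_coeff_zero]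
    have hG0 : G.coeff 0 ≠ 0 := by
      intro h
      rw [h, map_zero] at hGcoeff
      exact mul_ne_zero h0 hfσ0 hGcoeff.symm
    -- the two reversal identities
    have hrevf : f.reverse = C (f.coeff 0) * f.map σ := by
      rw [← hscr, ← mul_assoc, ← C_mul, mul_inv_cancel₀ h0, C_1, one_mul]
    have hσf0 : σ (f.coeff 0) ≠ 0 := fun h => h0 (σinj (by rw [h, map_zero]))
    have hrevfσ : (f.map σ).reverse = C (σ (f.coeff 0)) * f := by
      have h1 := congrArg (Polynomial.map σ) hscr
      rw [Polynomial.map_mul, map_C, map_inv₀, hmapσσ, hrevmapσ] at h1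
      calc (f.map σ).reverse
          = C (σ (f.coeff 0)) * (C (σ (f.coeff 0))⁻¹ * (f.map σ).reverse) := by
            rw [← mul_assoc, ← C_mul, mul_inv_cancel₀ hσf0, C_1, one_mul]
        _ = C (σ (f.coeff 0)) * f := by rw [h1]
    -- the key irreducibility helper
    have hkey : ∀ a : F[X], a.natDegree = n → f ∣ a.map φ → False := by
      intro a hadeg hdvd
      have hane : a ≠ 0 := by
        intro h
        rw [h, natDegree_zero] at hadeg
        omega
      have hamapne : a.map φ ≠ 0 := by
        rwa [Ne, Polynomial.map_eq_zero_iff φinj]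
      obtain ⟨c, hc⟩ := hdvd
      have hcne : c ≠ 0 := by
        intro h
        rw [h, mul_zero] at hc
        exact hamapne hc
      have hcdeg : c.natDegree = 0 := by
        have := congrArg natDegree hc
        rw [natDegree_map_eq_of_injective φinj, hadeg,
          natDegree_mul hmon.ne_zero hcne, hdeg] at this
        omega
      have hceq : c = C (c.coeff 0) := eq_C_of_natDegree_eq_zero hcdeg
      have hcc : c.coeff 0 ≠ 0 := by
        intro h
        rw [hceq, h, C_0] at hcne
        exact hcne rfl
      have hamapc : a.map φ = C (c.coeff 0) * f := by
        rw [hc, mul_comm]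
        exact congrArg (fun q => q * f) hceq
      have hfσeq : f.map σ = C ((σ (c.coeff 0))⁻¹ * c.coeff 0) * f := by
        have hf_eq : f = C (c.coeff 0)⁻¹ * a.map φ := by
          rw [hamapc, ← mul_assoc, ← C_mul, inv_mul_cancel₀ hcc, C_1, one_mul]
        calc f.map σ = (C (c.coeff 0)⁻¹ * a.map φ).map σ := by rw [← hf_eq]
          _ = C (σ (c.coeff 0))⁻¹ * a.map φ := by
              rw [Polynomial.map_mul, map_C, map_inv₀, hmapφσ]
          _ = C (σ (c.coeff 0))⁻¹ * (C (c.coeff 0) * f) := by rw [hamapc]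
          _ = C ((σ (c.coeff 0))⁻¹ * c.coeff 0) * f := by rw [C_mul, mul_assoc]
      have hlc : (σ (c.coeff 0))⁻¹ * c.coeff 0 = 1 := by
        have := hfσmon.leadingCoeff
        rw [hfσeq, leadingCoeff_mul, leadingCoeff_C, hmon.leadingCoeff, mul_one] at this
        exact this
      apply hne
      rw [hfσeq, hlc, C_1, one_mul]
    refine ⟨G, hGmon, ?_, hGdeg, hG0, ?_, ?_⟩
    · -- irreducible
      rw [irreducible_iff]
      constructor
      · intro h
        have := natDegree_eq_zero_of_isUnit h
        omega
      · intro a b hab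
        by_contra hcon
        push_neg at hcon
        obtain ⟨hua, hub⟩ := hcon
        have hG0' : G ≠ 0 := hGmon.ne_zero
        have ha0 : a ≠ 0 := fun h => hG0' (by rw [hab, h, zero_mul])
        have hb0 : b ≠ 0 := fun h => hG0' (by rw [hab, h, mul_zero])
        have hsum : a.natDegree + b.natDegree = 2 * n := by
          rw [← natDegree_mul ha0 hb0, ← hab, hGdeg]
        have hamapne : a.map φ ≠ 0 := by rwa [Ne, Polynomial.map_eq_zero_iff φinj]
        have hbmapne : b.map φ ≠ 0 := by rwa [Ne, Polynomial.map_eq_zero_iff φinj]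
        have hPab : a.map φ * b.map φ = f * f.map σ := by
          rw [← Polynomial.map_mul, ← hab, hGmap, hPdef]
        have hfdvd2 : f ∣ a.map φ ∨ f ∣ b.map φ :=
          hprime.2.2 _ _ ⟨f.map σ, by rw [hPab]⟩
        have hfσdvd2 : f.map σ ∣ a.map φ ∨ f.map σ ∣ b.map φ :=
          (hirrmapσ f hirr).prime.2.2 _ _ ⟨f, by rw [hPab]; ring⟩
        have hbothcase : ∀ x : F[X], x ≠ 0 → f ∣ x.map φ → f.map σ ∣ x.map φ →
            2 * n ≤ x.natDegree := by
          intro x hx0 hf hfσ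
          have hdvd : f * f.map σ ∣ x.map φ := (hcop hne).mul_dvd hf hfσ
          have := natDegree_le_of_dvd hdvd (by rwa [Ne, Polynomial.map_eq_zero_iff φinj])
          rwa [natDegree_mul hmon.ne_zero hfσmon.ne_zero, hdeg, hfσdeg, ← two_mul,
            natDegree_map_eq_of_injective φinj] at this
        have hadegpos : 0 < a.natDegree := by
          rcases Nat.eq_zero_or_pos a.natDegree with h | h
          · exfalso
            apply hua
            rw [eq_C_of_natDegree_eq_zero h]
            exact isUnit_C.mpr (IsUnit.mk0 _ (by
              intro hc
              apply ha0
              rw [eq_C_of_natDegree_eq_zero h, hc, C_0]))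
          · exact h
        have hbdegpos : 0 < b.natDegree := by
          rcases Nat.eq_zero_or_pos b.natDegree with h | h
          · exfalso
            apply hub
            rw [eq_C_of_natDegree_eq_zero h]
            exact isUnit_C.mpr (IsUnit.mk0 _ (by
              intro hc
              apply hb0
              rw [eq_C_of_natDegree_eq_zero h, hc, C_0]))
          · exact h
        rcases hfdvd2 with hfa | hfb <;> rcases hfσdvd2 with hsa | hsb
        · have := hbothcase a ha0 hfa hsa; omega
        · -- f ∣ a, fσ ∣ b : then deg a = n
          have h1 : n ≤ a.natDegree := by
            have := natDegree_le_of_dvd hfa hamapne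
            rwa [hdeg, natDegree_map_eq_of_injective φinj] at this
          have h2 : n ≤ b.natDegree := by
            have := natDegree_le_of_dvd hsb hbmapne
            rwa [hfσdeg, natDegree_map_eq_of_injective φinj] at this
          exact hkey a (by omega) hfa
        · -- f ∣ b, fσ ∣ a
          have h1 : n ≤ b.natDegree := by
            have := natDegree_le_of_dvd hfb hbmapne
            rwa [hdeg, natDegree_map_eq_of_injective φinj] at this
          have h2 : n ≤ a.natDegree := by
            have := natDegree_le_of_dvd hsa hamapne
            rwa [hfσdeg, natDegree_map_eq_of_injective φinj] at this
          exact hkey b (by omega) hfb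
        · have := hbothcase b hb0 hfb hsb; omega
    · -- self-reciprocal
      apply Polynomial.map_injective φ φinj
      rw [Polynomial.map_mul, map_C, map_inv₀, hrevmapφ, hGmap, hGcoeff]
      rw [hPdef, reverse_mul_of_domain, hrevf, hrevfσ, mul_inv, C_mul]
      have e1 : C (f.coeff 0)⁻¹ * C (f.coeff 0) = 1 := by
        rw [← C_mul, inv_mul_cancel₀ h0, C_1]
      have e2 : C ((σ (f.coeff 0)))⁻¹ * C (σ (f.coeff 0)) = 1 := by
        rw [← C_mul, inv_mul_cancel₀, C_1]
        intro h
        exact h0 (σinj (by rw [h, map_zero]))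
      have hσcoeff : ((f.map σ).coeff 0) = σ (f.coeff 0) := coeff_map σ 0
      rw [hσcoeff]
      calc C (f.coeff 0)⁻¹ * C (σ (f.coeff 0))⁻¹ *
            (C (f.coeff 0) * f.map σ * (C (σ (f.coeff 0)) * f))
          = (C (f.coeff 0)⁻¹ * C (f.coeff 0)) * (C (σ (f.coeff 0))⁻¹ * C (σ (f.coeff 0))) *
            (f * f.map σ) := by ring
        _ = f * f.map σ := by rw [e1, e2, one_mul, one_mul]
    · -- divisibility
      rw [hGmap, hPdef]
      exact dvd_mul_right _ _
  · -- backward direction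
    rintro ⟨G, hGmon, hGirr, hGdeg, hG0, hGsr, hfdvd⟩
    have hGmapmon : (G.map φ).Monic := hGmon.map φ
    have hGmapne : G.map φ ≠ 0 := hGmapmon.ne_zero
    have hGmapdeg : (G.map φ).natDegree = 2 * n := by
      rw [natDegree_map_eq_of_injective φinj, hGdeg]
    -- f ≠ f.map σ
    have hne : f ≠ f.map σ := by
      intro hEq
      have hlift : f ∈ lifts φ := by
        rw [lifts_iff_coeff_lifts]
        intro i
        have hfixc : (f.coeff i) ^ p ^ e = f.coeff i := by
          rw [← σdef]
          conv_rhs => rw [hEq]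
          rw [coeff_map]
        exact aux_mem_range hF hq1 _ hfixc
      obtain ⟨A, hA, hAdeg, hAmon⟩ := lifts_and_natDegree_eq_and_monic hlift hmon
      have hAdvdG : A ∣ G := by
        rw [← map_dvd_map φ φinj hAmon, hA]
        exact hfdvd
      obtain ⟨c, hc⟩ := hAdvdG
      have hAdeg' : A.natDegree = n := by rw [hAdeg, hdeg]
      rcases hGirr.isUnit_or_isUnit hc with h | h
      · have := natDegree_eq_zero_of_isUnit h
        omega
      · have hcne : c ≠ 0 := fun hh => by
          rw [hh, mul_zero] at hc
          exact hGmon.ne_zero hc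
        have := natDegree_eq_zero_of_isUnit h
        have := congrArg natDegree hc
        rw [natDegree_mul hAmon.ne_zero hcne] at this
        omega
    -- f.map σ divides G.map φ
    obtain ⟨h, hEqn⟩ := hfdvd
    have hfσdvdG : f.map σ ∣ G.map φ := by
      have h1 := congrArg (Polynomial.map σ) hEqn
      rw [hmapφσ, Polynomial.map_mul] at h1
      exact ⟨h.map σ, h1⟩
    have hfdvd' : f ∣ G.map φ := ⟨h, hEqn⟩
    -- G.map φ = f * f.map σ
    have hGmapeq : G.map φ = f * f.map σ := by
      refine (aux_monic_dvd_eq (hmon.mul hfσmon) hGmapmon ((hcop hne).mul_dvd hfdvd' hfσdvdG)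
        ?_).symm
      rw [hGmapdeg, natDegree_mul hmon.ne_zero hfσmon.ne_zero, hdeg, hfσdeg]
      omega
    -- map the self-reciprocity of G to K
    have hG0K : (G.map φ).coeff 0 = f.coeff 0 * σ (f.coeff 0) := by
      rw [hGmapeq, mul_coeff_zero, coeff_map]
    have hsrK : C ((f.coeff 0) * σ (f.coeff 0))⁻¹ * (f.reverse * (f.reverse).map σ)
        = f * f.map σ := by
      have h1 := congrArg (Polynomial.map φ) hGsr
      rw [Polynomial.map_mul, map_C, map_inv₀, hrevmapφ, ← coeff_map, hG0K] at h1
      rw [← hGmapeq, ← h1, hGmapeq, reverse_mul_of_domain, hrevmapσ]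
    -- introduce f*
    set fs : K[X] := C (f.coeff 0)⁻¹ * f.reverse with hfsdef
    have hntd : f.natTrailingDegree = 0 := natTrailingDegree_eq_zero.mpr (Or.inr h0)
    have hrevlead : f.reverse.leadingCoeff = f.coeff 0 := by
      rw [reverse_leadingCoeff, trailingCoeff, hntd]
    have hrevne : f.reverse ≠ 0 := by
      rw [Ne, reverse_eq_zero]
      exact hmon.ne_zero
    have hfsmon : fs.Monic := by
      rw [hfsdef, Monic, leadingCoeff_mul, leadingCoeff_C, hrevlead, inv_mul_cancel₀ h0]
    have hCne : (C (f.coeff 0)⁻¹ : K[X]) ≠ 0 := by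
      rw [Ne, C_eq_zero, inv_eq_zero]
      exact h0
    have hfsdeg : fs.natDegree = n := by
      rw [hfsdef, natDegree_mul hCne hrevne, natDegree_C, reverse_natDegree, hntd, hdeg]
      omega
    have hfsσmon : (fs.map σ).Monic := hfsmon.map σ
    have hfsσdeg : (fs.map σ).natDegree = n := by
      rw [natDegree_map_eq_of_injective σinj, hfsdeg]
    -- key equation : fs * fs.map σ = f * f.map σ
    have hkeyeq : fs * fs.map σ = f * f.map σ := by
      rw [← hsrK, hfsdef, Polynomial.map_mul, map_C,
        show σ ((f.coeff 0)⁻¹) = (σ (f.coeff 0))⁻¹ from map_inv₀ σ _, mul_inv, C_mul]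
      ring
    have hfd : f ∣ fs * fs.map σ := by
      rw [hkeyeq]
      exact dvd_mul_right _ _
    rcases hprime.2.2 _ _ hfd with hcase | hcase
    · exact absurd (hfsdef ▸ (aux_monic_dvd_eq hmon hfsmon hcase
        (by rw [hfsdeg, hdeg])).symm) hself
    · have hffs : f = fs.map σ :=
        aux_monic_dvd_eq hmon hfsσmon hcase (by rw [hfsσdeg, hdeg])
      have h2 := congrArg (Polynomial.map σ) hffs
      rw [hmapσσ] at h2
      exact h2.symm
end

section
/- Let q be a prime power and n > 1 odd. The number of self-conjugate-reciprocal monic irreducible polynomials of degree n over F_{q^2} equals (1/n)·∑_{d | n} μ(d)·q^{n/d}, where μ is the Möbius function. -/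
/-!
Let `#K = q ^ 2`. The roots of the minimal polynomial of `x` over `K` are the conjugates
`x ^ q ^ (2 * i)`, its normalised reciprocal is the minimal polynomial of `x⁻¹` and its
coefficientwise `q`-th power is the minimal polynomial of `x ^ q`. Hence `minpoly K x` is
self-conjugate-reciprocal iff `x⁻¹ = x ^ q ^ (2 * i + 1)` for some `i`, which for odd degree `n`
happens iff `x ^ (q ^ n + 1) = 1`. So `n` times the number of such polynomials of degree `n` is the
number of `(q ^ n + 1)`-th roots of unity of degree `n` over `K`.

For odd `m`, a `(q ^ m + 1)`-th root of unity of degree `c` has `c ∣ m` and is a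
`(q ^ c + 1)`-th root of unity. So if `N c` counts the `(q ^ c + 1)`-th roots of unity of degree
`c`, then `∑_{c ∣ m} N c = q ^ m + 1` for all odd `m`, and Möbius inversion over the odd numbers
gives `N n = ∑_{d ∣ n} μ d (q ^ (n / d) + 1)`, whose constant part vanishes for `n > 1`.
-/

open Polynomial IntermediateField FiniteField Finset
open scoped ArithmeticFunction.Moebius

namespace SelfConjugateReciprocal

theorem pow_pow_odd_eq_pow {M : Type*} [Monoid M] {x : M} {r k : ℕ} (h : x ^ (r * r) = x)
    (hk : Odd k) : x ^ r ^ k = x ^ r := by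
  obtain ⟨j, rfl⟩ := hk
  induction j with
  | zero => simp
  | succ j ih => rw [show 2 * (j + 1) + 1 = 2 + (2 * j + 1) by ring, pow_add, pow_mul, sq, h, ih]

open ArithmeticFunction in
theorem sum_divisors_moebius_eq_zero {n : ℕ} (hn : 1 < n) : ∑ d ∈ n.divisors, μ d = 0 := by
  rw [← coe_mul_zeta_apply, moebius_mul_coe_zeta, one_apply_ne hn.ne']

section Minpoly

variable {K L : Type*} [Field K] [Field L] [Algebra K L] {x : L}

theorem monic_C_inv_coeff_zero_mul_reverse {f : K[X]} (h0 : f.coeff 0 ≠ 0) :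
    (C (f.coeff 0)⁻¹ * f.reverse).Monic := by
  have htrail : f.trailingCoeff = f.coeff 0 := by
    rw [trailingCoeff, natTrailingDegree_eq_zero_of_constantCoeff_ne_zero h0]
  rw [Monic, leadingCoeff_mul, leadingCoeff_C, reverse_leadingCoeff, htrail, inv_mul_cancel₀ h0]

theorem natDegree_C_inv_coeff_zero_mul_reverse {f : K[X]} (h0 : f.coeff 0 ≠ 0) :
    (C (f.coeff 0)⁻¹ * f.reverse).natDegree = f.natDegree := by
  rw [natDegree_C_mul (inv_ne_zero h0), reverse_natDegree,
    natTrailingDegree_eq_zero_of_constantCoeff_ne_zero h0, Nat.sub_zero]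

theorem adjoin_simple_inv : K⟮x⁻¹⟯ = K⟮x⟯ :=
  le_antisymm (adjoin_simple_le_iff.mpr (inv_mem (mem_adjoin_simple_self K x)))
    (adjoin_simple_le_iff.mpr (by simpa using inv_mem (mem_adjoin_simple_self K x⁻¹)))

theorem minpoly_inv (hx : IsIntegral K x) (hx0 : x ≠ 0) :
    minpoly K x⁻¹ = C ((minpoly K x).coeff 0)⁻¹ * (minpoly K x).reverse := by
  have h0 := minpoly.coeff_zero_ne_zero hx hx0
  have hroot : aeval x⁻¹ (C ((minpoly K x).coeff 0)⁻¹ * (minpoly K x).reverse) = 0 := by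
    have : Invertible x := invertibleOfNonzero hx0
    rw [map_mul]
    refine mul_eq_zero_of_right _ ?_
    rw [aeval_def, ← invOf_eq_inv, eval₂_reverse_eq_zero_iff, ← aeval_def, minpoly.aeval]
  have hdeg : (minpoly K x⁻¹).natDegree = (minpoly K x).natDegree := by
    rw [← adjoin.finrank hx, ← adjoin.finrank hx.inv, adjoin_simple_inv]
  refine (eq_of_monic_of_dvd_of_natDegree_le (minpoly.monic hx.inv)
    (monic_C_inv_coeff_zero_mul_reverse h0) (minpoly.dvd K _ hroot) ?_).symm
  rw [natDegree_C_inv_coeff_zero_mul_reverse h0, hdeg]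

theorem minpoly_pow_expChar_pow (p e : ℕ) [ExpChar K p] [PerfectRing K p] [ExpChar L p]
    (hx : IsIntegral K x) :
    minpoly K (x ^ p ^ e) = (minpoly K x).map (iterateFrobenius K p e) := by
  have hcomm : (algebraMap K L).comp (iterateFrobenius K p e) =
      (iterateFrobenius L p e).comp (algebraMap K L) := by
    ext a
    simp [iterateFrobenius_def]
  have hroot : aeval (x ^ p ^ e) ((minpoly K x).map (iterateFrobenius K p e)) = 0 := by
    rw [aeval_def, eval₂_map, hcomm, ← iterateFrobenius_def, ← hom_eval₂, ← aeval_def,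
      minpoly.aeval, map_zero]
  have hirr : Irreducible ((minpoly K x).map (iterateFrobenius K p e)) :=
    (MulEquiv.irreducible_iff (mapEquiv (iterateFrobeniusEquiv K p e)).toMulEquiv).mpr
      (minpoly.irreducible hx)
  exact (minpoly.eq_of_irreducible_of_monic hirr hroot ((minpoly.monic hx).map _)).symm

theorem card_eq_mul_ncard_of_mem_iff_minpoly_mem [PerfectField K] [IsAlgClosed L]
    {S : Set K[X]} {n : ℕ} (hS : ∀ f ∈ S, f.Monic ∧ Irreducible f ∧ f.natDegree = n)
    {T : Finset L} (hT : ∀ x, x ∈ T ↔ minpoly K x ∈ S) : #T = n * S.ncard := by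
  classical
  have hfiber : ∀ f ∈ S, {x ∈ T | minpoly K x = f} = (f.rootSet L).toFinset := by
    intro f hf
    obtain ⟨hmon, hirr, -⟩ := hS f hf
    ext x
    simp only [mem_filter, Set.mem_toFinset, mem_rootSet, hT]
    constructor
    · rintro ⟨-, rfl⟩
      exact ⟨hmon.ne_zero, minpoly.aeval K x⟩
    · rintro ⟨-, hx⟩
      obtain rfl := (minpoly.eq_of_irreducible_of_monic hirr hx hmon).symm
      exact ⟨hf, rfl⟩
  have himage : (T.image (minpoly K) : Set K[X]) = S := by
    ext f
    simp only [coe_image, Set.mem_image, mem_coe, hT]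
    refine ⟨fun ⟨x, hx, hxf⟩ => hxf ▸ hx, fun hf => ?_⟩
    obtain ⟨hmon, hirr, -⟩ := hS f hf
    obtain ⟨x, hx⟩ := IsAlgClosed.exists_aeval_eq_zero L f (degree_pos_of_irreducible hirr).ne'
    obtain rfl := (minpoly.eq_of_irreducible_of_monic hirr hx hmon).symm
    exact ⟨x, hf, rfl⟩
  calc #T = ∑ f ∈ T.image (minpoly K), #{x ∈ T | minpoly K x = f} := card_eq_sum_card_image _ _
    _ = ∑ _f ∈ T.image (minpoly K), n := sum_congr rfl fun f hf => by
        have hfS : f ∈ S := himage ▸ mem_coe.mpr hf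
        obtain ⟨-, hirr, hdeg⟩ := hS f hfS
        rw [hfiber f hfS, Set.toFinset_card, card_rootSet_eq_natDegree
          (PerfectField.separable_of_irreducible hirr) (IsAlgClosed.splits _), hdeg]
    _ = n * S.ncard := by rw [sum_const, smul_eq_mul, mul_comm, ← himage, Set.ncard_coe_finset]

theorem card_nthRootsFinset_one [IsAlgClosed L] {N : ℕ} (hN : (N : L) ≠ 0) :
    #(nthRootsFinset N (1 : L)) = N := by
  have : NeZero (N : L) := ⟨hN⟩
  have hN0 : 0 < N := Nat.pos_of_ne_zero (by rintro rfl; simp at hN)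
  obtain ⟨ζ, hζ⟩ := IsAlgClosed.exists_root (cyclotomic N L) (degree_cyclotomic_pos N L hN0).ne'
  exact (isRoot_cyclotomic_iff.mp hζ).card_nthRootsFinset

variable [Fintype K]

theorem natDegree_minpoly_dvd_iff (hx : IsIntegral K x) (s : ℕ) :
    (minpoly K x).natDegree ∣ s ↔ x ^ Fintype.card K ^ s = x := by
  rw [(minpoly.irreducible hx).natDegree_dvd_iff_dvd_X_pow_card_pow_sub_X, minpoly.dvd_iff,
    Nat.card_eq_fintype_card]
  simp [sub_eq_zero]

theorem minpoly_eq_iff_exists_eq_pow_card_pow [Normal K L] {y : L} :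
    minpoly K x = minpoly K y ↔ ∃ i, x = y ^ Fintype.card K ^ i := by
  constructor
  · intro h
    obtain ⟨σ, rfl⟩ := (Normal.minpoly_eq_iff_mem_orbit (F := K) (E := L)).mp h
    have : FiniteDimensional K K⟮y⟯ :=
      adjoin.finiteDimensional (Algebra.IsIntegral.isIntegral y)
    have : Finite K⟮y⟯ := Module.finite_of_finite K
    obtain ⟨i, hi⟩ := (bijective_frobeniusAlgEquivOfAlgebraic_pow K K⟮y⟯).2 (σ.restrictNormal K⟮y⟯)
    refine ⟨i, ?_⟩
    have := congrArg (algebraMap K⟮y⟯ L) (AlgEquiv.congr_fun hi (AdjoinSimple.gen K y))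
    rw [AlgEquiv.restrictNormal_commutes] at this
    simpa [AlgEquiv.coe_pow, coe_frobeniusAlgEquivOfAlgebraic_iterate] using this.symm
  · rintro ⟨i, rfl⟩
    simpa [AlgEquiv.coe_pow, coe_frobeniusAlgEquivOfAlgebraic_iterate] using
      minpoly.algEquiv_eq (frobeniusAlgEquivOfAlgebraic K L ^ i) y

end Minpoly

section OddDegree

variable {K L : Type*} [Field K] [Fintype K] [Field L] [Algebra K L] {q : ℕ} {x : L}

theorem pow_pow_add_one_eq_one_iff (hK : Fintype.card K = q ^ 2) (hx : IsIntegral K x) {a : ℕ}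
    (ha : Odd a) :
    x ^ (q ^ a + 1) = 1 ↔
      (minpoly K x).natDegree ∣ a ∧ x ^ (q ^ (minpoly K x).natDegree + 1) = 1 := by
  set c := (minpoly K x).natDegree
  have hfix : x ^ (q ^ c * q ^ c) = x := by
    rw [← mul_pow, ← sq, ← hK]
    exact (natDegree_minpoly_dvd_iff hx c).mp dvd_rfl
  have hodd_mul : c ∣ a → x ^ q ^ a = x ^ q ^ c := by
    rintro ⟨k, rfl⟩
    rw [pow_mul]
    exact pow_pow_odd_eq_pow hfix (Nat.odd_mul.mp ha).2
  constructor
  · intro h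
    have hinv : x ^ q ^ a = x⁻¹ := eq_inv_of_mul_eq_one_left (by rwa [← pow_succ])
    have hdvd : c ∣ a := by
      rw [natDegree_minpoly_dvd_iff hx, hK, ← pow_mul, mul_comm, pow_mul, sq, pow_mul, hinv,
        inv_pow, hinv, inv_inv]
    exact ⟨hdvd, by rwa [pow_succ, ← hodd_mul hdvd, ← pow_succ]⟩
  · rintro ⟨hdvd, h⟩
    rwa [pow_succ, hodd_mul hdvd, ← pow_succ]

theorem minpoly_inv_eq_minpoly_pow_iff [Normal K L] (hK : Fintype.card K = q ^ 2) (hx0 : x ≠ 0)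
    (hodd : Odd (minpoly K x).natDegree) :
    minpoly K x⁻¹ = minpoly K (x ^ q) ↔ x ^ (q ^ (minpoly K x).natDegree + 1) = 1 := by
  have hx : IsIntegral K x := Algebra.IsIntegral.isIntegral x
  have hpow : ∀ i, (x ^ q) ^ (q ^ 2) ^ i = x ^ q ^ (2 * i + 1) := fun i => by
    rw [← pow_mul, ← pow_mul, pow_succ, mul_comm]
  simp_rw [minpoly_eq_iff_exists_eq_pow_card_pow, hK, hpow]
  constructor
  · rintro ⟨i, hi⟩
    have h : x ^ (q ^ (2 * i + 1) + 1) = 1 := by rw [pow_succ, ← hi, inv_mul_cancel₀ hx0]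
    exact ((pow_pow_add_one_eq_one_iff hK hx (odd_two_mul_add_one i)).mp h).2
  · intro h
    obtain ⟨i, hi⟩ := hodd
    exact ⟨i, by rw [← hi]; exact (eq_inv_of_mul_eq_one_left (by rwa [← pow_succ])).symm⟩

end OddDegree

section UnitaryRoots

variable {K L : Type*} [Field K] [Field L] [Algebra K L] {q : ℕ} {x : L}

variable (K) in
/-- When `#K = q ^ 2` and `c` is odd, these are the roots of the self-conjugate-reciprocal
irreducible polynomials of degree `c` over `K` (`mem_unitaryRootsOfDegree_iff`). -/
noncomputable def unitaryRootsOfDegree (q c : ℕ) : Finset L :=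
  {x ∈ nthRootsFinset (q ^ c + 1) (1 : L) | (minpoly K x).natDegree = c}

theorem mem_unitaryRootsOfDegree {c : ℕ} :
    x ∈ unitaryRootsOfDegree K q c ↔ x ^ (q ^ c + 1) = 1 ∧ (minpoly K x).natDegree = c := by
  rw [unitaryRootsOfDegree, mem_filter, mem_nthRootsFinset (by positivity)]

variable [Fintype K]

theorem mem_unitaryRootsOfDegree_iff [Normal K L] (p e : ℕ) [ExpChar K p] [PerfectRing K p]
    [ExpChar L p] (hK : Fintype.card K = (p ^ e) ^ 2) {n : ℕ} (hodd : Odd n) (x : L) :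
    x ∈ unitaryRootsOfDegree K (p ^ e) n ↔
      (minpoly K x).Monic ∧ Irreducible (minpoly K x) ∧ (minpoly K x).natDegree = n ∧
        (minpoly K x).coeff 0 ≠ 0 ∧ C ((minpoly K x).coeff 0)⁻¹ * (minpoly K x).reverse =
          (minpoly K x).map (iterateFrobenius K p e) := by
  have hx : IsIntegral K x := Algebra.IsIntegral.isIntegral x
  rw [mem_unitaryRootsOfDegree]
  constructor
  · rintro ⟨h, rfl⟩
    have hx0 : x ≠ 0 := by
      rintro rfl
      simp at h
    rw [← minpoly_inv hx hx0, ← minpoly_pow_expChar_pow p e hx]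
    exact ⟨minpoly.monic hx, minpoly.irreducible hx, rfl, minpoly.coeff_zero_ne_zero hx hx0,
      (minpoly_inv_eq_minpoly_pow_iff hK hx0 hodd).mpr h⟩
  · rintro ⟨-, -, rfl, h0, hscr⟩
    have hx0 : x ≠ 0 := fun h => h0 ((minpoly.coeff_zero_eq_zero hx).mpr h)
    rw [← minpoly_inv hx hx0, ← minpoly_pow_expChar_pow p e hx] at hscr
    exact ⟨(minpoly_inv_eq_minpoly_pow_iff hK hx0 hodd).mp hscr, rfl⟩

theorem sum_card_unitaryRootsOfDegree [Normal K L] [IsAlgClosed L] (hK : Fintype.card K = q ^ 2)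
    {m : ℕ} (hm : Odd m) :
    ∑ c ∈ m.divisors, #(unitaryRootsOfDegree K q c : Finset L) = q ^ m + 1 := by
  have hq : (q : L) = 0 := by
    have h := FiniteField.cast_card_eq_zero K
    rw [hK, Nat.cast_pow, pow_eq_zero_iff two_ne_zero] at h
    rw [← map_natCast (algebraMap K L), h, RingHom.map_zero]
  have hx : ∀ x : L, IsIntegral K x := Algebra.IsIntegral.isIntegral
  have hdvd : ∀ x ∈ nthRootsFinset (q ^ m + 1) (1 : L), (minpoly K x).natDegree ∈ m.divisors := by
    intro x hx1
    rw [mem_nthRootsFinset (by positivity)] at hx1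
    exact Nat.mem_divisors.mpr ⟨((pow_pow_add_one_eq_one_iff hK (hx x) hm).mp hx1).1, hm.pos.ne'⟩
  rw [← card_nthRootsFinset_one (N := q ^ m + 1) (L := L) (by simp [hq, hm.pos.ne']),
    card_eq_sum_card_fiberwise hdvd]
  refine sum_congr rfl fun c hc => congrArg card (ext fun x => ?_)
  rw [mem_unitaryRootsOfDegree, mem_filter, mem_nthRootsFinset (by positivity)]
  constructor
  · rintro ⟨h, rfl⟩
    exact ⟨(pow_pow_add_one_eq_one_iff hK (hx x) hm).mpr ⟨Nat.dvd_of_mem_divisors hc, h⟩, rfl⟩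
  · rintro ⟨h, rfl⟩
    exact ⟨((pow_pow_add_one_eq_one_iff hK (hx x) hm).mp h).2, rfl⟩

theorem card_unitaryRootsOfDegree [Normal K L] [IsAlgClosed L] (hK : Fintype.card K = q ^ 2)
    {n : ℕ} (hn : 1 < n) (hodd : Odd n) :
    (#(unitaryRootsOfDegree K q n : Finset L) : ℤ) = ∑ d ∈ n.divisors, μ d * (q : ℤ) ^ (n / d) := by
  have hinv := (ArithmeticFunction.sum_eq_iff_sum_mul_moebius_eq_on (R := ℤ)
    (f := fun c => (#(unitaryRootsOfDegree K q c : Finset L) : ℤ)) (g := fun m => (q : ℤ) ^ m + 1)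
    {m | Odd m} fun _ _ hab hb => hb.of_dvd_nat hab).mp
    (fun m _ hm => by exact_mod_cast sum_card_unitaryRootsOfDegree hK hm) n (by omega) hodd
  simp only [Int.cast_id] at hinv
  rw [← hinv, Nat.sum_divisorsAntidiagonal fun a b => μ a * ((q : ℤ) ^ b + 1)]
  simp only [mul_add, mul_one, sum_add_distrib, sum_divisors_moebius_eq_zero hn, add_zero]

end UnitaryRoots

end SelfConjugateReciprocal

open Polynomial SelfConjugateReciprocal

theorem stmt18_general (p e : ℕ) [Fact p.Prime]
    (K : Type*) [Field K] [Fintype K] [CharP K p] (hK : Fintype.card K = p ^ (e * 2))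
    (n : ℕ) (hn : 1 < n) (hodd : Odd n) :
    (Set.ncard {f : K[X] | f.Monic ∧ Irreducible f ∧ f.natDegree = n ∧ f.coeff 0 ≠ 0 ∧
        C (f.coeff 0)⁻¹ * f.reverse = f.map (iterateFrobenius K p e)} : ℚ) =
      (1 / (n : ℚ)) * ∑ d ∈ n.divisors,
        (ArithmeticFunction.moebius d : ℚ) * ((p : ℚ) ^ e) ^ (n / d) := by
  set S := {f : K[X] | f.Monic ∧ Irreducible f ∧ f.natDegree = n ∧ f.coeff 0 ≠ 0 ∧
    C (f.coeff 0)⁻¹ * f.reverse = f.map (iterateFrobenius K p e)}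
  have hK2 : Fintype.card K = (p ^ e) ^ 2 := by rw [hK, pow_mul]
  have hroots := card_eq_mul_ncard_of_mem_iff_minpoly_mem (L := AlgebraicClosure K) (S := S)
    (fun f hf => ⟨hf.1, hf.2.1, hf.2.2.1⟩) (mem_unitaryRootsOfDegree_iff p e hK2 hodd)
  have hcount := card_unitaryRootsOfDegree (L := AlgebraicClosure K) hK2 hn hodd
  rw [hroots] at hcount
  have hcountℚ := congrArg (Int.cast : ℤ → ℚ) hcount
  push_cast at hcountℚ
  have hn0 : (n : ℚ) ≠ 0 := Nat.cast_ne_zero.mpr (by omega)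
  rw [← hcountℚ]
  field_simp

theorem stmt18 (p e : ℕ) [Fact p.Prime] (he : 0 < e)
    (K : Type*) [Field K] [Fintype K] [CharP K p] (hK : Fintype.card K = p ^ (e * 2))
    (n : ℕ) (hn : 1 < n) (hodd : Odd n) :
    (Set.ncard {f : K[X] | f.Monic ∧ Irreducible f ∧ f.natDegree = n ∧ f.coeff 0 ≠ 0 ∧
        C (f.coeff 0)⁻¹ * f.reverse = f.map (iterateFrobenius K p e)} : ℚ) =
      (1 / (n : ℚ)) * ∑ d ∈ n.divisors,
        (ArithmeticFunction.moebius d : ℚ) * ((p : ℚ) ^ e) ^ (n / d) :=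
  stmt18_general p e K hK n hn hodd
end
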